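/- arXiv:2310.15596 — 8 statements merged into one kernel-verified Lean document; each statement's English description precedes it below -/
import Mathlib

section
/- Let Θ, Υ ∈ ℝ^{n×n} and Γ ∈ ℝ^{s×s} be diagonal matrices with diagonal entries θ_i ∈ (0,2), α_i > 0, γ_i > 0 respectively, let β > 0, let U be a real r×s matrix, set L' = Uᵀ U (an s×s positive semidefinite matrix), and assume β·γ_i < 1/λ_max(L') for every diagonal entry γ_i of Γ. Define the block matrices Q = fromBlocks with diagonal blocks Υ⁻¹, Γ⁻¹, (1/β) I_r and the single off-diagonal block −Uᵀ in the (2,3) position (all other off-diagonal blocks zero), and M = fromBlocks with diagonal blocks Θ, I_s, I_r and the single off-diagonal block −Γ Uᵀ in the (2,3) position (all other off-diagonal blocks zero). Then M is invertible, H := Q M⁻¹ is symmetric positive definite, D := Qᵀ + Q − Mᵀ H M is symmetric positive definite, and H − D is positive semidefinite. -/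
/-!
`H := diag(Υ⁻¹Θ⁻¹, Γ⁻¹, β⁻¹ I)` satisfies `H M = Q`, so `Q M⁻¹ = H` without inverting `M`, and
`Mᵀ H M = Mᵀ Q` turns `D` into `diag(Υ⁻¹(2 − Θ), Γ⁻¹, β⁻¹ I − U Γ Uᵀ)`; hence
`H − D = diag(Υ⁻¹Θ⁻¹(Θ − I)², 0, U Γ Uᵀ)`. All blocks are diagonal except `β⁻¹ I − U Γ Uᵀ`, which is
positive definite because `xᵀ U Γ Uᵀ x < ‖Uᵀ x‖² / (β λ_max) ≤ ‖x‖² / β` by the step-size condition.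
-/

open Matrix

namespace Matrix

section BlockDiagonal

variable {R : Type*} [CommRing R] [StarRing R] {m p : Type*} [Fintype m] [Fintype p]
  {A : Matrix m m R} {D : Matrix p p R}

theorem dotProduct_fromBlocks_zero_mulVec (x : m ⊕ p → R) :
    star x ⬝ᵥ (fromBlocks A 0 0 D *ᵥ x)
      = star (x ∘ Sum.inl) ⬝ᵥ (A *ᵥ (x ∘ Sum.inl))
        + star (x ∘ Sum.inr) ⬝ᵥ (D *ᵥ (x ∘ Sum.inr)) := by
  rw [fromBlocks_mulVec, dotProduct_block]
  simp only [Matrix.zero_mulVec, add_zero, zero_add, Sum.elim_comp_inl, Sum.elim_comp_inr]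
  rfl

variable [PartialOrder R] [IsOrderedAddMonoid R]

theorem PosSemidef.fromBlocks_zero (hA : A.PosSemidef) (hD : D.PosSemidef) :
    (fromBlocks A 0 0 D).PosSemidef := by
  refine .of_dotProduct_mulVec_nonneg (hA.1.fromBlocks (by simp) hD.1) fun x => ?_
  rw [dotProduct_fromBlocks_zero_mulVec]
  exact add_nonneg (hA.dotProduct_mulVec_nonneg _) (hD.dotProduct_mulVec_nonneg _)

theorem PosDef.fromBlocks_zero [AddLeftStrictMono R] (hA : A.PosDef) (hD : D.PosDef) :
    (fromBlocks A 0 0 D).PosDef := by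
  refine .of_dotProduct_mulVec_pos (hA.1.fromBlocks (by simp) hD.1) fun x hx => ?_
  rw [dotProduct_fromBlocks_zero_mulVec]
  by_cases hl : x ∘ Sum.inl = 0
  · have hr : x ∘ Sum.inr ≠ 0 := fun hr => hx <| by
      simpa [hl, hr] using (Sum.elim_comp_inl_inr x).symm
    exact add_pos_of_nonneg_of_pos (hA.posSemidef.dotProduct_mulVec_nonneg _)
      (hD.dotProduct_mulVec_pos hr)
  · exact add_pos_of_pos_of_nonneg (hA.dotProduct_mulVec_pos hl)
      (hD.posSemidef.dotProduct_mulVec_nonneg _)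

end BlockDiagonal

theorem fromBlocks_sub {n l o m α : Type*} [Sub α] (A : Matrix n l α) (B : Matrix n m α)
    (C : Matrix o l α) (D : Matrix o m α) (A' : Matrix n l α) (B' : Matrix n m α)
    (C' : Matrix o l α) (D' : Matrix o m α) :
    fromBlocks A B C D - fromBlocks A' B' C' D' = fromBlocks (A - A') (B - B') (C - C') (D - D') := by
  ext (_ | _) (_ | _) <;> rfl

theorem inv_diagonal_of_ne_zero {K m : Type*} [Field K] [Fintype m] [DecidableEq m] {v : m → K}
    (hv : ∀ i, v i ≠ 0) : (diagonal v)⁻¹ = diagonal v⁻¹ :=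
  inv_eq_left_inv <| by
    rw [diagonal_mul_diagonal, ← diagonal_one]
    exact congrArg diagonal (funext fun i => inv_mul_cancel₀ (hv i))

theorem dotProduct_mulVec_diagonal_self {R p : Type*} [CommSemiring R] [Fintype p] [DecidableEq p]
    (γ y : p → R) :
    y ⬝ᵥ (diagonal γ *ᵥ y) = ∑ i, γ i * y i ^ 2 := by
  simp only [dotProduct, mulVec_diagonal]
  exact Finset.sum_congr rfl fun i _ => by ring

section LargestEigenvalue

variable {m p : Type*} [Fintype m] [Fintype p]

open scoped MatrixOrder in
theorem IsHermitian.dotProduct_mulVec_le_iSup_eigenvalues [DecidableEq m] {A : Matrix m m ℝ}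
    (hA : A.IsHermitian) (v : m → ℝ) :
    v ⬝ᵥ (A *ᵥ v) ≤ (⨆ j, hA.eigenvalues j) * (v ⬝ᵥ v) := by
  have hle : A ≤ algebraMap ℝ _ (⨆ j, hA.eigenvalues j) := by
    refine le_algebraMap_of_spectrum_le (fun x hx => ?_) hA.isSelfAdjoint
    obtain ⟨i, rfl⟩ : x ∈ Set.range hA.eigenvalues := hA.spectrum_real_eq_range_eigenvalues ▸ hx
    exact le_ciSup (Set.finite_range _).bddAbove i
  have := (Matrix.le_iff.mp hle).dotProduct_mulVec_nonneg v
  simp only [Algebra.algebraMap_eq_smul_one, sub_mulVec, smul_mulVec, one_mulVec, dotProduct_sub,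
    dotProduct_smul, smul_eq_mul, star_trivial] at this
  linarith

theorem dotProduct_transpose_mulVec_self_le [DecidableEq p] {U : Matrix m p ℝ}
    (hU : (Uᵀ * U).IsHermitian) (x : m → ℝ) :
    (Uᵀ *ᵥ x) ⬝ᵥ (Uᵀ *ᵥ x) ≤ (⨆ j, hU.eigenvalues j) * (x ⬝ᵥ x) := by
  set y := Uᵀ *ᵥ x
  have hUy : (U *ᵥ y) ⬝ᵥ (U *ᵥ y) ≤ (⨆ j, hU.eigenvalues j) * (y ⬝ᵥ y) := by
    simpa [← mulVec_mulVec, dotProduct_mulVec _ _ (U *ᵥ y), vecMul_transpose]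
      using hU.dotProduct_mulVec_le_iSup_eigenvalues y
  -- `‖y‖⁴ = ⟪U y, x⟫² ≤ ‖U y‖² ‖x‖² ≤ λ ‖y‖² ‖x‖²`: no need to compare the spectra of `UᵀU`, `UUᵀ`.
  have hcs : (y ⬝ᵥ y) ^ 2 ≤ ((U *ᵥ y) ⬝ᵥ (U *ᵥ y)) * (x ⬝ᵥ x) := by
    have hyy : y ⬝ᵥ y = (U *ᵥ y) ⬝ᵥ x := by
      rw [dotProduct_comm, dotProduct_mulVec, vecMul_transpose]
    rw [hyy]
    simpa only [dotProduct, sq] using Finset.sum_mul_sq_le_sq_mul_sq Finset.univ (U *ᵥ y) x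
  have hl : 0 ≤ ⨆ j, hU.eigenvalues j := by
    have hpsd : (Uᵀ * U).PosSemidef := by simpa using posSemidef_conjTranspose_mul_self U
    exact Real.iSup_nonneg fun j => hU.posSemidef_iff_eigenvalues_nonneg.mp hpsd j
  have hx : 0 ≤ x ⬝ᵥ x := by simpa using dotProduct_star_self_nonneg x
  have hy : 0 ≤ y ⬝ᵥ y := by simpa using dotProduct_star_self_nonneg y
  nlinarith [mul_le_mul_of_nonneg_right hUy hx, mul_nonneg hl hx]

theorem posSemidef_mul_diagonal_mul_transpose [DecidableEq p] (U : Matrix m p ℝ) {γ : p → ℝ}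
    (hγ : ∀ i, 0 ≤ γ i) : (U * diagonal γ * Uᵀ).PosSemidef := by
  simpa [conjTranspose_eq_transpose_of_trivial] using
    (posSemidef_diagonal_iff.mpr hγ).mul_mul_conjTranspose_same U

theorem posDef_smul_one_sub_mul_diagonal_mul_transpose [DecidableEq m] [DecidableEq p]
    {U : Matrix m p ℝ} (hU : (Uᵀ * U).IsHermitian) {γ : p → ℝ} {β : ℝ}
    (hγ : ∀ i, 0 < γ i) (hβ : 0 < β) (hstep : ∀ i, β * γ i < 1 / (⨆ j, hU.eigenvalues j)) :
    ((1 / β) • (1 : Matrix m m ℝ) - U * diagonal γ * Uᵀ).PosDef := by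
  set l := ⨆ j, hU.eigenvalues j
  refine .of_dotProduct_mulVec_pos ((isHermitian_one.smul (.all _)).sub
    (posSemidef_mul_diagonal_mul_transpose U fun i => (hγ i).le).1) fun x hx => ?_
  have hx : 0 < x ⬝ᵥ x := by simpa using dotProduct_star_self_pos_iff.mpr hx
  set y := Uᵀ *ᵥ x
  have hquad : x ⬝ᵥ ((U * diagonal γ * Uᵀ) *ᵥ x) = ∑ i, γ i * y i ^ 2 := by
    rw [← mulVec_mulVec, ← mulVec_mulVec, dotProduct_mulVec, ← mulVec_transpose,
      dotProduct_mulVec_diagonal_self]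
  suffices ∑ i, γ i * y i ^ 2 < 1 / β * (x ⬝ᵥ x) by
    simpa [sub_mulVec, smul_mulVec, hquad] using this
  rcases eq_or_ne y 0 with hy | hy
  · simpa [hy] using mul_pos (one_div_pos.mpr hβ) hx
  obtain ⟨j₀, hj₀⟩ := Function.ne_iff.mp hy
  have hl : 0 < l := one_div_pos.mp ((mul_pos hβ (hγ j₀)).trans (hstep j₀))
  have hγl : ∀ i, γ i < 1 / l / β := fun i => by
    rw [lt_div_iff₀ hβ, mul_comm]
    exact hstep i
  calc ∑ i, γ i * y i ^ 2 < ∑ i, 1 / l / β * y i ^ 2 := by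
        refine Finset.sum_lt_sum (fun i _ => ?_) ⟨j₀, Finset.mem_univ _, ?_⟩
        · exact mul_le_mul_of_nonneg_right (hγl i).le (sq_nonneg _)
        · exact mul_lt_mul_of_pos_right (hγl j₀) (sq_pos_of_ne_zero hj₀)
    _ = 1 / l / β * (y ⬝ᵥ y) := by simp only [dotProduct, Finset.mul_sum, sq]
    _ ≤ 1 / l / β * (l * (x ⬝ᵥ x)) := by
        gcongr
        exact dotProduct_transpose_mulVec_self_le hU x
    _ = 1 / β * (x ⬝ᵥ x) := by field_simp

end LargestEigenvalue

end Matrix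

section DPMM

variable {R : Type*} [CommRing R] {m p q : Type*} [Fintype m] [Fintype p] [Fintype q]
  [DecidableEq m] [DecidableEq p] [DecidableEq q]

def dpmmM (Θ : Matrix m m R) (Γ : Matrix p p R) (U : Matrix q p R) :
    Matrix (m ⊕ (p ⊕ q)) (m ⊕ (p ⊕ q)) R :=
  fromBlocks Θ 0 0 (fromBlocks 1 (-(Γ * Uᵀ)) 0 1)

noncomputable def dpmmQ (Υ : Matrix m m R) (Γ : Matrix p p R) (U : Matrix q p R) (c : R) :
    Matrix (m ⊕ (p ⊕ q)) (m ⊕ (p ⊕ q)) R :=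
  fromBlocks Υ⁻¹ 0 0 (fromBlocks Γ⁻¹ (-Uᵀ) 0 (c • 1))

variable (Υ Θ : Matrix m m R) {Γ : Matrix p p R} (U : Matrix q p R) (c : R)

theorem det_dpmmM : (dpmmM Θ Γ U).det = Θ.det := by
  simp [dpmmM, det_fromBlocks_zero₂₁]

theorem fromBlocks_mul_dpmmM (hΘ : IsUnit Θ.det) (hΓ : IsUnit Γ.det) :
    fromBlocks (Υ⁻¹ * Θ⁻¹) 0 0 (fromBlocks Γ⁻¹ 0 0 (c • 1)) * dpmmM Θ Γ U = dpmmQ Υ Γ U c := by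
  simp [dpmmM, dpmmQ, fromBlocks_multiply, Matrix.mul_assoc, nonsing_inv_mul _ hΘ,
    nonsing_inv_mul_cancel_left _ _ hΓ]

theorem dpmmQ_mul_inv_dpmmM (hΘ : IsUnit Θ.det) (hΓ : IsUnit Γ.det) :
    dpmmQ Υ Γ U c * (dpmmM Θ Γ U)⁻¹
      = fromBlocks (Υ⁻¹ * Θ⁻¹) 0 0 (fromBlocks Γ⁻¹ 0 0 (c • 1)) := by
  rw [← fromBlocks_mul_dpmmM Υ Θ U c hΘ hΓ,
    mul_nonsing_inv_cancel_right _ _ (by rwa [det_dpmmM])]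

theorem transpose_dpmmQ_add_dpmmQ_sub (hΘ : IsUnit Θ.det) (hΓ : IsUnit Γ.det) (hΓt : Γᵀ = Γ) :
    (dpmmQ Υ Γ U c)ᵀ + dpmmQ Υ Γ U c
        - (dpmmM Θ Γ U)ᵀ * (dpmmQ Υ Γ U c * (dpmmM Θ Γ U)⁻¹) * dpmmM Θ Γ U
      = fromBlocks (Υ⁻¹ᵀ + Υ⁻¹ - Θᵀ * Υ⁻¹) 0 0 (fromBlocks Γ⁻¹ 0 0 (c • 1 - U * Γ * Uᵀ)) := by
  rw [Matrix.mul_assoc, nonsing_inv_mul_cancel_right _ _ (by rwa [det_dpmmM])]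
  simp [dpmmM, dpmmQ, fromBlocks_transpose, fromBlocks_multiply, transpose_nonsing_inv, hΓt,
    sub_eq_add_neg, fromBlocks_neg, fromBlocks_add, Matrix.mul_assoc, mul_nonsing_inv _ hΓ]

end DPMM

/-- For the block matrices `Q` and `M` of the DPMM algorithm, under the stepsize
conditions `θᵢ ∈ (0,2)`, `αᵢ > 0`, `γᵢ > 0`, `β > 0` and `β γᵢ < 1 / λ_max(Uᵀ U)`,
the matrix `M` is invertible, `H = Q M⁻¹` is symmetric positive definite,
`D = Qᵀ + Q − Mᵀ H M` is symmetric positive definite, and `H − D` is positive semidefinite. -/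
theorem stmt2 {n s r : ℕ}
    (θ α : Fin n → ℝ) (γ : Fin s → ℝ) (β : ℝ)
    (hθ : ∀ i, θ i ∈ Set.Ioo (0 : ℝ) 2) (hα : ∀ i, 0 < α i) (hγ : ∀ i, 0 < γ i)
    (hβ : 0 < β)
    (U : Matrix (Fin r) (Fin s) ℝ)
    (hL' : (Uᵀ * U).IsHermitian)
    (hstep : ∀ i, β * γ i < 1 / (⨆ j, hL'.eigenvalues j))
    (Θ : Matrix (Fin n) (Fin n) ℝ) (hΘ : Θ = Matrix.diagonal θ)
    (Υ : Matrix (Fin n) (Fin n) ℝ) (hΥ : Υ = Matrix.diagonal α)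
    (Γ : Matrix (Fin s) (Fin s) ℝ) (hΓ : Γ = Matrix.diagonal γ)
    (Q M : Matrix (Fin n ⊕ (Fin s ⊕ Fin r)) (Fin n ⊕ (Fin s ⊕ Fin r)) ℝ)
    (hQ : Q = Matrix.fromBlocks Υ⁻¹ 0 0
      (Matrix.fromBlocks Γ⁻¹ (-Uᵀ) 0 ((1 / β) • (1 : Matrix (Fin r) (Fin r) ℝ))))
    (hM : M = Matrix.fromBlocks Θ 0 0
      (Matrix.fromBlocks 1 (-(Γ * Uᵀ)) 0 1)) :
    IsUnit M.det ∧ (Q * M⁻¹).PosDef ∧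
      (Qᵀ + Q - Mᵀ * (Q * M⁻¹) * M).PosDef ∧
      ((Q * M⁻¹) - (Qᵀ + Q - Mᵀ * (Q * M⁻¹) * M)).PosSemidef := by
  subst hΘ hΥ hΓ
  obtain rfl : Q = dpmmQ (diagonal α) (diagonal γ) U (1 / β) := hQ
  obtain rfl : M = dpmmM (diagonal θ) (diagonal γ) U := hM
  have hθ₀ : ∀ i, θ i ≠ 0 := fun i => (hθ i).1.ne'
  have hγ₀ : ∀ i, γ i ≠ 0 := fun i => (hγ i).ne'
  have hdetΘ : IsUnit (diagonal θ).det := by simpa [Finset.prod_ne_zero_iff] using hθ₀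
  have hdetΓ : IsUnit (diagonal γ).det := by simpa [Finset.prod_ne_zero_iff] using hγ₀
  rw [transpose_dpmmQ_add_dpmmQ_sub _ _ _ _ hdetΘ hdetΓ (diagonal_transpose γ),
    dpmmQ_mul_inv_dpmmM _ _ _ _ hdetΘ hdetΓ, det_dpmmM,
    inv_diagonal_of_ne_zero fun i => (hα i).ne', inv_diagonal_of_ne_zero hθ₀,
    inv_diagonal_of_ne_zero hγ₀, fromBlocks_sub, fromBlocks_sub]
  simp only [sub_self, sub_sub_cancel, diagonal_transpose, diagonal_mul_diagonal,
    diagonal_add, diagonal_sub, Pi.inv_apply]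
  have hΓinv : (diagonal γ⁻¹).PosDef := posDef_diagonal_iff.mpr fun i => inv_pos.mpr (hγ i)
  refine ⟨hdetΘ,
    .fromBlocks_zero (posDef_diagonal_iff.mpr fun i => ?_)
      (.fromBlocks_zero hΓinv (PosDef.one.smul (one_div_pos.mpr hβ))),
    .fromBlocks_zero (posDef_diagonal_iff.mpr fun i => ?_)
      (.fromBlocks_zero hΓinv (posDef_smul_one_sub_mul_diagonal_mul_transpose hL' hγ hβ hstep)),
    .fromBlocks_zero (posSemidef_diagonal_iff.mpr fun i => ?_) (.fromBlocks_zero .zero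
      (posSemidef_mul_diagonal_mul_transpose U fun i => (hγ i).le))⟩
  all_goals obtain ⟨hθi, hθi'⟩ := hθ i; have hαi := hα i
  · positivity
  · calc (0 : ℝ) < (2 - θ i) * (α i)⁻¹ := mul_pos (by linarith) (by positivity)
      _ = _ := by ring
  · calc (0 : ℝ) ≤ (θ i - 1) ^ 2 * ((α i)⁻¹ * (θ i)⁻¹) := by positivity
      _ = _ := by field_simp; ring
end

section
/- Let Φ : ℝ^N → Set(ℝ^N) be a monotone set-valued map, let Q, M be real N×N matrices with M invertible such that H := Q M⁻¹ is symmetric positive definite, and set D := Qᵀ + Q − Mᵀ H M. Let ξ, ξ̂, V ∈ ℝ^N satisfy Q(ξ − ξ̂) + V ∈ Φ(ξ̂), and let ξ⁺ = ξ − M(ξ − ξ̂). Then for every ξ* ∈ ℝ^N with 0 ∈ Φ(ξ*), it holds that ‖ξ⁺ − ξ*‖²_H ≤ ‖ξ − ξ*‖²_H − (ξ − ξ̂)ᵀ D (ξ − ξ̂) + 2⟨ξ̂ − ξ*, V⟩. -/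
open Matrix

/-! With `d = ξ - ξ̂` and `e = ξ - ξ*`, so that `ξ⁺ - ξ* = e - M d`, expanding `‖e - M d‖²_H` with
`H M = Q` turns the claimed inequality into the exact identity
`RHS - LHS = 2 ⟨ξ̂ - ξ*, Q d + V⟩`, which is nonnegative by monotonicity of `Φ`
at the pairs `(ξ̂, Q d + V)` and `(ξ*, 0)`. -/

namespace Matrix

variable {n R : Type*} [Fintype n] [CommRing R]

theorem IsSymm.dotProduct_mulVec_comm {H : Matrix n n R} (hH : H.IsSymm) (x y : n → R) :
    x ⬝ᵥ H *ᵥ y = y ⬝ᵥ H *ᵥ x := by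
  rw [← dotProduct_transpose_mulVec, hH.eq]

theorem IsSymm.dotProduct_mulVec_sub_mul_sub {H M Q : Matrix n n R} (hH : H.IsSymm)
    (hQ : H * M = Q) (e d : n → R) :
    (e - M *ᵥ d) ⬝ᵥ H *ᵥ (e - M *ᵥ d) + 2 * ((e - d) ⬝ᵥ Q *ᵥ d) =
      e ⬝ᵥ H *ᵥ e - d ⬝ᵥ (Qᵀ + Q - Mᵀ * H * M) *ᵥ d := by
  have hHM : ∀ x, x ⬝ᵥ H *ᵥ (M *ᵥ d) = x ⬝ᵥ Q *ᵥ d := fun x => by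
    rw [mulVec_mulVec, hQ]
  have hMHM : d ⬝ᵥ (Mᵀ * H * M) *ᵥ d = M *ᵥ d ⬝ᵥ H *ᵥ (M *ᵥ d) := by
    rw [Matrix.mul_assoc, ← mulVec_mulVec, dotProduct_transpose_mulVec, dotProduct_comm,
      mulVec_mulVec]
  rw [sub_mulVec, add_mulVec, dotProduct_sub, dotProduct_add, dotProduct_transpose_mulVec,
    hMHM, mulVec_sub, dotProduct_sub, sub_dotProduct, sub_dotProduct, sub_dotProduct,
    hH.dotProduct_mulVec_comm (M *ᵥ d) e, hHM, hHM]
  ring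

end Matrix

/-- Fundamental contraction inequality of the prediction–correction step.
Here `‖x‖²_H` is written as `x ⬝ᵥ H.mulVec x` with `H = Q M⁻¹`, and
`D = Qᵀ + Q − Mᵀ H M`. -/
theorem stmt5 {N : ℕ} (Φ : (Fin N → ℝ) → Set (Fin N → ℝ))
    (hmono : ∀ u v p q, p ∈ Φ u → q ∈ Φ v → 0 ≤ (u - v) ⬝ᵥ (p - q))
    (Q M : Matrix (Fin N) (Fin N) ℝ) (hM : IsUnit M.det)
    (hH : (Q * M⁻¹).PosDef)
    (ξ ξhat V : Fin N → ℝ)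
    (hincl : Q.mulVec (ξ - ξhat) + V ∈ Φ ξhat)
    (ξplus : Fin N → ℝ) (hplus : ξplus = ξ - M.mulVec (ξ - ξhat))
    (ξstar : Fin N → ℝ) (hstar : (0 : Fin N → ℝ) ∈ Φ ξstar) :
    (ξplus - ξstar) ⬝ᵥ (Q * M⁻¹).mulVec (ξplus - ξstar) ≤
      (ξ - ξstar) ⬝ᵥ (Q * M⁻¹).mulVec (ξ - ξstar)
        - (ξ - ξhat) ⬝ᵥ (Qᵀ + Q - Mᵀ * (Q * M⁻¹) * M).mulVec (ξ - ξhat)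
        + 2 * ((ξhat - ξstar) ⬝ᵥ V) := by
  have hsymm : (Q * M⁻¹).IsSymm := isHermitian_iff_isSymm.mp hH.isHermitian
  have hidentity := hsymm.dotProduct_mulVec_sub_mul_sub (nonsing_inv_mul_cancel_right M Q hM)
    (ξ - ξstar) (ξ - ξhat)
  rw [show ξ - ξstar - (ξ - ξhat) = ξhat - ξstar by abel] at hidentity
  have hmonotone := hmono ξhat ξstar _ 0 hincl hstar
  rw [sub_zero, dotProduct_add] at hmonotone
  rw [hplus, show ξ - M *ᵥ (ξ - ξhat) - ξstar = ξ - ξstar - M *ᵥ (ξ - ξhat) by abel]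
  linarith
end

section
/- Let Φ : ℝ^N → Set(ℝ^N) be a monotone set-valued map, let Q, M be real N×N matrices with M invertible such that H := Q M⁻¹ is symmetric positive definite and D := Qᵀ + Q − Mᵀ H M is symmetric positive definite. Let ξ, ξ̂, V ∈ ℝ^N satisfy Q(ξ − ξ̂) + V ∈ Φ(ξ̂), let ξ⁺ = ξ − M(ξ − ξ̂), and let ε ≥ 0 with ‖V‖ ≤ ε. Then for every ξ* with 0 ∈ Φ(ξ*), ‖ξ⁺ − ξ*‖_H ≤ ‖ξ − ξ*‖_H + μ ε, where μ = λ_min(H)^{−1/2} + λ_min(D)^{−1/2}. -/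
/-!
With `w = ξ - ξ*`, `e = ξ - ξ̂` and `H M = Q`, expanding the square gives
`‖ξ⁺ - ξ*‖²_H = ‖w‖²_H - ‖e‖²_D - 2 ⟨w - e, Q e⟩`, and monotonicity of `Φ` at `ξ̂`, `ξ*`
bounds `-⟨w - e, Q e⟩` by `⟨w - e, V⟩ ≤ ε (‖w‖ + ‖e‖)`. Since `‖x‖ ≤ λ_min(A)^{-1/2} ‖x‖_A`,
this is at most `ε (α ‖w‖_H + β ‖e‖_D)` with `α = λ_min(H)^{-1/2}`, `β = λ_min(D)^{-1/2}`,
and completing the square absorbs `‖e‖_D`.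
-/

open Matrix

-- `λ_min • 1 ≤ A` in the Loewner order, by the continuous functional calculus.
open scoped MatrixOrder in
theorem Matrix.IsHermitian.iInf_eigenvalues_mul_dotProduct_self_le {n : Type*} [Fintype n]
    [DecidableEq n] {A : Matrix n n ℝ} (hA : A.IsHermitian) (x : n → ℝ) :
    (⨅ i, hA.eigenvalues i) * (x ⬝ᵥ x) ≤ x ⬝ᵥ A *ᵥ x := by
  have h : algebraMap ℝ (Matrix n n ℝ) (⨅ i, hA.eigenvalues i) ≤ A := by
    rw [algebraMap_le_iff_le_spectrum (ha := hA.isSelfAdjoint),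
      hA.spectrum_real_eq_range_eigenvalues]
    rintro _ ⟨i, rfl⟩
    exact ciInf_le (Set.finite_range _).bddBelow i
  simpa [Algebra.algebraMap_eq_smul_one, sub_mulVec, smul_mulVec, dotProduct_smul] using
    (Matrix.le_iff.mp h).dotProduct_mulVec_nonneg x

section EuclideanNorm

variable {n : Type*} [Fintype n]

theorem sqrt_dotProduct_self_eq_norm (x : n → ℝ) : √(x ⬝ᵥ x) = ‖WithLp.toLp 2 x‖ := by
  rw [norm_eq_sqrt_real_inner, EuclideanSpace.inner_toLp_toLp, star_trivial]

theorem dotProduct_le_sqrt_mul_sqrt (x y : n → ℝ) : x ⬝ᵥ y ≤ √(x ⬝ᵥ x) * √(y ⬝ᵥ y) := by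
  simpa [sqrt_dotProduct_self_eq_norm, EuclideanSpace.inner_toLp_toLp, dotProduct_comm] using
    real_inner_le_norm (WithLp.toLp 2 x) (WithLp.toLp 2 y)

theorem sqrt_dotProduct_self_sub_le (x y : n → ℝ) :
    √((x - y) ⬝ᵥ (x - y)) ≤ √(x ⬝ᵥ x) + √(y ⬝ᵥ y) := by
  simpa only [sqrt_dotProduct_self_eq_norm, WithLp.toLp_sub] using
    norm_sub_le (WithLp.toLp 2 x) (WithLp.toLp 2 y)

end EuclideanNorm

theorem Matrix.PosDef.sqrt_dotProduct_self_le {n : Type*} [Fintype n] [DecidableEq n]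
    {A : Matrix n n ℝ} (hA : A.PosDef) (x : n → ℝ) :
    √(x ⬝ᵥ x) ≤ (√(⨅ i, hA.1.eigenvalues i))⁻¹ * √(x ⬝ᵥ A *ᵥ x) := by
  cases isEmpty_or_nonempty n
  · simp [dotProduct]
  obtain ⟨i, hi⟩ := exists_eq_ciInf_of_finite (f := hA.1.eigenvalues)
  have hpos : 0 < ⨅ i, hA.1.eigenvalues i := hi ▸ hA.eigenvalues_pos i
  rw [← Real.sqrt_inv, ← Real.sqrt_mul (inv_nonneg.mpr hpos.le)]
  exact Real.sqrt_le_sqrt <| (le_inv_mul_iff₀ hpos).mpr <|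
    hA.1.iInf_eigenvalues_mul_dotProduct_self_le x

theorem Matrix.PosDef.sub_dotProduct_le {n : Type*} [Fintype n] [DecidableEq n]
    {A B : Matrix n n ℝ} (hA : A.PosDef) (hB : B.PosDef) {V : n → ℝ} {ε : ℝ}
    (hV : √(V ⬝ᵥ V) ≤ ε) (x y : n → ℝ) :
    (x - y) ⬝ᵥ V ≤ ε * ((√(⨅ i, hA.1.eigenvalues i))⁻¹ * √(x ⬝ᵥ A *ᵥ x) +
      (√(⨅ i, hB.1.eigenvalues i))⁻¹ * √(y ⬝ᵥ B *ᵥ y)) :=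
  calc (x - y) ⬝ᵥ V ≤ √((x - y) ⬝ᵥ (x - y)) * ε :=
        (dotProduct_le_sqrt_mul_sqrt _ _).trans (by gcongr)
    _ ≤ _ := by
        rw [mul_comm]
        refine mul_le_mul_of_nonneg_left ?_ ((Real.sqrt_nonneg _).trans hV)
        exact (sqrt_dotProduct_self_sub_le x y).trans
          (add_le_add (hA.sqrt_dotProduct_self_le x) (hB.sqrt_dotProduct_self_le y))

theorem dotProduct_mulVec_sub_mulVec_eq {n R : Type*} [Fintype n] [CommRing R]
    {H M Q : Matrix n n R} (hH : H.IsSymm) (hHM : H * M = Q) (w e : n → R) :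
    (w - M *ᵥ e) ⬝ᵥ H *ᵥ (w - M *ᵥ e) =
      w ⬝ᵥ H *ᵥ w - e ⬝ᵥ (Qᵀ + Q - Mᵀ * H * M) *ᵥ e - 2 * ((w - e) ⬝ᵥ Q *ᵥ e) := by
  have hHMe : H *ᵥ (M *ᵥ e) = Q *ᵥ e := by rw [mulVec_mulVec, hHM]
  have hsymm : (M *ᵥ e) ⬝ᵥ H *ᵥ w = w ⬝ᵥ Q *ᵥ e := by
    rw [dotProduct_mulVec, ← mulVec_transpose, hH.eq, hHMe, dotProduct_comm]
  have hMHM : e ⬝ᵥ (Mᵀ * H * M) *ᵥ e = (M *ᵥ e) ⬝ᵥ Q *ᵥ e := by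
    rw [← hHMe, mul_assoc, ← mulVec_mulVec, dotProduct_mulVec, vecMul_transpose, mulVec_mulVec]
  have hQt : e ⬝ᵥ Qᵀ *ᵥ e = e ⬝ᵥ Q *ᵥ e := by
    rw [mulVec_transpose, dotProduct_comm, ← dotProduct_mulVec]
  simp only [mulVec_sub, sub_dotProduct, dotProduct_sub, sub_mulVec, add_mulVec,
    dotProduct_add, hHMe, hsymm, hMHM, hQt, dotProduct_comm (M *ᵥ e) (Q *ᵥ e)]
  ring

theorem Real.sqrt_le_sqrt_add_of_le_sub_add {T S d α β ε : ℝ} (hS : 0 ≤ S) (hd : 0 ≤ d)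
    (hα : 0 ≤ α) (hβ : 0 ≤ β) (hε : 0 ≤ ε) (hT : T ≤ S - d + 2 * ε * (α * √S + β * √d)) :
    √T ≤ √S + (α + β) * ε := by
  refine Real.sqrt_le_iff.mpr ⟨by positivity, hT.trans ?_⟩
  nlinarith [Real.sq_sqrt hS, Real.sq_sqrt hd, mul_nonneg (Real.sqrt_nonneg S) (mul_nonneg hβ hε),
    mul_nonneg (mul_nonneg hα hβ) (mul_nonneg hε hε), sq_nonneg (α * ε), sq_nonneg (√d - β * ε)]

/-- Quasi-Fejér inequality for one inexact step: with `H = Q M⁻¹` and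
`D = Qᵀ + Q − Mᵀ H M` both symmetric positive definite, `‖V‖ ≤ ε` implies
`‖ξ⁺ − ξ*‖_H ≤ ‖ξ − ξ*‖_H + μ ε` where `μ = λ_min(H)^{-1/2} + λ_min(D)^{-1/2}`. -/
theorem stmt6 {N : ℕ} (Φ : (Fin N → ℝ) → Set (Fin N → ℝ))
    (hmono : ∀ u v p q, p ∈ Φ u → q ∈ Φ v → 0 ≤ (u - v) ⬝ᵥ (p - q))
    (Q M : Matrix (Fin N) (Fin N) ℝ) (hM : IsUnit M.det)
    (hH : (Q * M⁻¹).PosDef)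
    (hD : (Qᵀ + Q - Mᵀ * (Q * M⁻¹) * M).PosDef)
    (ξ ξhat V : Fin N → ℝ)
    (hincl : Q.mulVec (ξ - ξhat) + V ∈ Φ ξhat)
    (ξplus : Fin N → ℝ) (hplus : ξplus = ξ - M.mulVec (ξ - ξhat))
    (ε : ℝ) (hε : 0 ≤ ε) (hV : Real.sqrt (V ⬝ᵥ V) ≤ ε)
    (ξstar : Fin N → ℝ) (hstar : (0 : Fin N → ℝ) ∈ Φ ξstar) :
    Real.sqrt ((ξplus - ξstar) ⬝ᵥ (Q * M⁻¹).mulVec (ξplus - ξstar)) ≤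
      Real.sqrt ((ξ - ξstar) ⬝ᵥ (Q * M⁻¹).mulVec (ξ - ξstar)) +
        ((Real.sqrt (⨅ i, hH.1.eigenvalues i))⁻¹ +
          (Real.sqrt (⨅ i, hD.1.eigenvalues i))⁻¹) * ε := by
  subst hplus
  set w := ξ - ξstar with hw
  set e := ξ - ξhat with he
  have hmon : 0 ≤ (w - e) ⬝ᵥ (Q *ᵥ e + V) := by
    simpa [hw, he] using hmono _ _ _ _ hincl hstar
  have hHM : Q * M⁻¹ * M = Q := by rw [mul_assoc, nonsing_inv_mul M hM, mul_one]
  rw [show ξ - M *ᵥ e - ξstar = w - M *ᵥ e by rw [hw]; abel,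
    dotProduct_mulVec_sub_mulVec_eq (isHermitian_iff_isSymm.mp hH.1) hHM w e]
  have hHw : 0 ≤ w ⬝ᵥ (Q * M⁻¹) *ᵥ w := by
    simpa using hH.posSemidef.dotProduct_mulVec_nonneg w
  have hDe : 0 ≤ e ⬝ᵥ (Qᵀ + Q - Mᵀ * (Q * M⁻¹) * M) *ᵥ e := by
    simpa using hD.posSemidef.dotProduct_mulVec_nonneg e
  refine Real.sqrt_le_sqrt_add_of_le_sub_add hHw hDe (by positivity) (by positivity) hε ?_
  rw [dotProduct_add] at hmon
  linarith [hH.sub_dotProduct_le hD hV w e]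
end

section
/- Let Φ : ℝ^N → Set(ℝ^N) be a monotone set-valued map whose graph {(u, p) : p ∈ Φ(u)} is closed in ℝ^N × ℝ^N, and suppose Φ⁻¹(0) = {ξ : 0 ∈ Φ(ξ)} is nonempty. Let Q, M be real N×N matrices with M invertible such that H := Q M⁻¹ is symmetric positive definite and D := Qᵀ + Q − Mᵀ H M is symmetric positive definite. Let sequences (ξ^k), (ξ̂^k), (V^k) in ℝ^N satisfy, for every k ≥ 0, Q(ξ^k − ξ̂^k) + V^k ∈ Φ(ξ̂^k) and ξ^{k+1} = ξ^k − M(ξ^k − ξ̂^k), with Σ_{k=0}^∞ ‖V^k‖ < ∞. Then (ξ^k) converges to some ξ^∞ ∈ ℝ^N with 0 ∈ Φ(ξ^∞). -/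
open Matrix

/-!
With `H = Q M⁻¹` one has `H M = Q`, and expanding `‖ξᵏ⁺¹ - ζ‖²_H` for a zero `ζ` of `Φ`, then
using monotonicity between `ξ̂ᵏ` and `ζ`, gives the inexact Fejér inequality
`‖ξᵏ⁺¹ - ζ‖²_H + ‖ξᵏ - ξ̂ᵏ‖²_D ≤ ‖ξᵏ - ζ‖²_H + 2 ⟨ξ̂ᵏ - ζ, Vᵏ⟩`.
By Cauchy–Schwarz the error term is controlled by `‖Vᵏ‖`, so `‖ξᵏ - ζ‖_H` converges for every
zero `ζ` and `ξᵏ - ξ̂ᵏ → 0`. Hence `(ξᵏ)` is bounded, its cluster points are zeros of `Φ` because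
the graph is closed, and Opial's argument upgrades this to convergence of the whole sequence.
-/

open Filter Topology

/-- `n → ℝ` carries the sup norm; `‖x‖₂` is its Euclidean norm. -/
local notation "‖" x "‖₂" => ‖(WithLp.toLp 2 x : EuclideanSpace ℝ _)‖

theorem exists_tendsto_of_le_add_of_summable {a ε : ℕ → ℝ} (ha : ∀ k, 0 ≤ a k)
    (hε : ∀ k, 0 ≤ ε k) (hsum : Summable ε) (hle : ∀ k, a (k + 1) ≤ a k + ε k) :
    ∃ L, Tendsto a atTop (𝓝 L) := by
  set tail : ℕ → ℝ := fun k => ∑' j, ε (j + k)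
  have hanti : Antitone (fun k => a k + tail k) := by
    refine antitone_nat_of_succ_le fun k => ?_
    have htail : tail k = ε k + tail (k + 1) := by
      simp only [tail, ((summable_nat_add_iff k).2 hsum).tsum_eq_zero_add, zero_add]
      simp only [add_right_comm _ 1 k, add_assoc]
    linarith [hle k]
  have hbdd : BddBelow (Set.range fun k => a k + tail k) :=
    ⟨0, by rintro _ ⟨k, rfl⟩; exact add_nonneg (ha k) (tsum_nonneg fun j => hε _)⟩
  exact ⟨_, by simpa [tail] using (tendsto_atTop_ciInf hanti hbdd).sub (tendsto_sum_nat_add ε)⟩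

theorem le_add_mul_of_sq_add_sq_le {y y' d ε α β : ℝ} (hy : 0 ≤ y) (hε : 0 ≤ ε)
    (hα : 0 ≤ α) (hβ : 0 ≤ β) (h : y' ^ 2 + d ^ 2 ≤ y ^ 2 + 2 * (α * y + β * d) * ε) :
    y' ≤ y + (α + β) * ε := by
  have hsq : y' ^ 2 ≤ (y + (α + β) * ε) ^ 2 := by
    nlinarith [sq_nonneg (d - β * ε), mul_nonneg (mul_nonneg hβ hy) hε,
      mul_nonneg (mul_nonneg hα hβ) (sq_nonneg ε), mul_nonneg hα hα]
  exact le_of_abs_le (abs_le_of_sq_le_sq hsq (by positivity))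

theorem le_sqrt_add_of_sq_le_add_mul {d t c : ℝ} (hc : 0 ≤ c)
    (h : d ^ 2 ≤ t + c * d) : d ≤ √t + c := by
  have ht : t ≤ √t ^ 2 := by
    rcases le_total 0 t with ht | ht
    · rw [Real.sq_sqrt ht]
    · exact ht.trans (sq_nonneg _)
  by_contra! hlt
  nlinarith [Real.sqrt_nonneg t]

theorem tendsto_zero_of_sq_add_sq_le {y d ε : ℕ → ℝ} {L α β : ℝ} (hy : Tendsto y atTop (𝓝 L))
    (hε : Tendsto ε atTop (𝓝 0)) (hd : ∀ k, 0 ≤ d k) (hε0 : ∀ k, 0 ≤ ε k) (hβ : 0 ≤ β)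
    (h : ∀ k, y (k + 1) ^ 2 + d k ^ 2 ≤ y k ^ 2 + 2 * (α * y k + β * d k) * ε k) :
    Tendsto d atTop (𝓝 0) := by
  refine squeeze_zero hd (fun k => le_sqrt_add_of_sq_le_add_mul (c := 2 * β * ε k)
    (t := y k ^ 2 - y (k + 1) ^ 2 + 2 * α * y k * ε k)
    (mul_nonneg (mul_nonneg zero_le_two hβ) (hε0 k)) (by linarith [h k])) ?_
  have ht := ((hy.pow 2).sub ((hy.comp (tendsto_add_atTop_nat 1)).pow 2)).add
    ((hy.const_mul (2 * α)).mul hε)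
  simpa using ht.sqrt.add (hε.const_mul (2 * β))

theorem exists_tendsto_of_sq_add_sq_le {y d ε : ℕ → ℝ} {α β : ℝ} (hy : ∀ k, 0 ≤ y k)
    (hε : ∀ k, 0 ≤ ε k) (hsum : Summable ε) (hα : 0 ≤ α) (hβ : 0 ≤ β)
    (h : ∀ k, y (k + 1) ^ 2 + d k ^ 2 ≤ y k ^ 2 + 2 * (α * y k + β * d k) * ε k) :
    ∃ L, Tendsto y atTop (𝓝 L) :=
  exists_tendsto_of_le_add_of_summable hy (fun k => mul_nonneg (add_nonneg hα hβ) (hε k))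
    (hsum.mul_left _) fun k => le_add_mul_of_sq_add_sq_le (hy k) (hε k) hα hβ (h k)

theorem exists_norm_le_mul_of_homogeneous {E : Type*} [NormedAddCommGroup E] [NormedSpace ℝ E]
    [FiniteDimensional ℝ E] {g : E → ℝ} (hg : Continuous g) (hpos : ∀ x ≠ 0, 0 < g x)
    (hsmul : ∀ (t : ℝ) x, g (t • x) = |t| * g x) : ∃ c > 0, ∀ x, ‖x‖ ≤ c * g x := by
  obtain ⟨m, hm, hmle⟩ := (isCompact_sphere (0 : E) 1).exists_forall_le' hg.continuousOn
    fun x hx => hpos x (ne_zero_of_mem_unit_sphere ⟨x, hx⟩)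
  refine ⟨m⁻¹, inv_pos.2 hm, fun x => ?_⟩
  rcases eq_or_ne x 0 with rfl | hx
  · simp [show g 0 = 0 by simpa using hsmul 0 0]
  · have hu := hmle (‖x‖⁻¹ • x) (by simp [norm_smul, hx])
    rw [hsmul, abs_of_pos (inv_pos.2 (norm_pos_iff.2 hx))] at hu
    rw [le_inv_mul_iff₀ hm]
    rwa [le_inv_mul_iff₀ (norm_pos_iff.2 hx), mul_comm] at hu

/-- Opial's lemma in a proper space. -/
theorem exists_mem_tendsto_of_opial {E : Type*} [NormedAddCommGroup E] [ProperSpace E]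
    {Z : Set E} {x : ℕ → E} {g : E → ℝ} {c : ℝ} (hg : Continuous g) (hg0 : g 0 = 0)
    (hle : ∀ y, ‖y‖ ≤ c * g y) (hZ : Z.Nonempty)
    (hconv : ∀ z ∈ Z, ∃ L, Tendsto (fun k => g (x k - z)) atTop (𝓝 L))
    (hclus : ∀ z (φ : ℕ → ℕ), StrictMono φ → Tendsto (x ∘ φ) atTop (𝓝 z) → z ∈ Z) :
    ∃ z ∈ Z, Tendsto x atTop (𝓝 z) := by
  obtain ⟨z₀, hz₀⟩ := hZ
  obtain ⟨L₀, hL₀⟩ := hconv z₀ hz₀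
  obtain ⟨R, hR⟩ := (hL₀.const_mul c).bddAbove_range
  have hball : ∀ k, x k ∈ Metric.closedBall z₀ R := fun k =>
    (dist_eq_norm (x k) z₀).trans_le ((hle _).trans (hR ⟨k, rfl⟩))
  obtain ⟨z, -, φ, hφ, hxφ⟩ := (isCompact_closedBall z₀ R).tendsto_subseq hball
  have hz := hclus z φ hφ hxφ
  obtain ⟨L, hL⟩ := hconv z hz
  have hL0 : L = 0 := by
    refine tendsto_nhds_unique (hL.comp hφ.tendsto_atTop) ?_
    simpa [hg0, Function.comp_def] using (hg.tendsto 0).comp (tendsto_sub_nhds_zero_iff.2 hxφ)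
  refine ⟨z, hz, tendsto_sub_nhds_zero_iff.1 (squeeze_zero_norm (fun k => hle (x k - z)) ?_)⟩
  simpa [hL0] using hL.const_mul c

section Euclidean

variable {n : Type*} [Fintype n]

theorem norm_le_norm_toLp_two (x : n → ℝ) : ‖x‖ ≤ ‖x‖₂ :=
  (pi_norm_le_iff_of_nonneg (norm_nonneg _)).2 fun i =>
    PiLp.norm_apply_le (WithLp.toLp 2 x : EuclideanSpace ℝ n) i

theorem norm_toLp_two_eq_sqrt_dotProduct (x : n → ℝ) : ‖x‖₂ = √(x ⬝ᵥ x) := by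
  rw [norm_eq_sqrt_real_inner, EuclideanSpace.inner_toLp_toLp, star_trivial]

theorem dotProduct_le_norm_toLp_two_mul (x y : n → ℝ) : x ⬝ᵥ y ≤ ‖x‖₂ * ‖y‖₂ := by
  have h := real_inner_le_norm (WithLp.toLp 2 x : EuclideanSpace ℝ n) (WithLp.toLp 2 y)
  rwa [EuclideanSpace.inner_toLp_toLp, star_trivial, dotProduct_comm] at h

end Euclidean

namespace Matrix

variable {n : Type*} [Fintype n]

noncomputable def quadNorm (A : Matrix n n ℝ) (x : n → ℝ) : ℝ := √(x ⬝ᵥ A *ᵥ x)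

theorem quadNorm_nonneg (A : Matrix n n ℝ) (x : n → ℝ) : 0 ≤ A.quadNorm x := Real.sqrt_nonneg _

theorem quadNorm_zero (A : Matrix n n ℝ) : A.quadNorm 0 = 0 := by simp [quadNorm]

theorem continuous_quadNorm (A : Matrix n n ℝ) : Continuous A.quadNorm := by
  unfold quadNorm dotProduct mulVec
  fun_prop

theorem quadNorm_smul (A : Matrix n n ℝ) (t : ℝ) (x : n → ℝ) :
    A.quadNorm (t • x) = |t| * A.quadNorm x := by
  rw [quadNorm, quadNorm, mulVec_smul, dotProduct_smul, smul_dotProduct, smul_eq_mul, smul_eq_mul,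
    ← mul_assoc, Real.sqrt_mul (mul_self_nonneg t), Real.sqrt_mul_self_eq_abs]

theorem PosSemidef.quadNorm_sq {A : Matrix n n ℝ} (hA : A.PosSemidef) (x : n → ℝ) :
    A.quadNorm x ^ 2 = x ⬝ᵥ A *ᵥ x :=
  Real.sq_sqrt (hA.dotProduct_mulVec_nonneg x)

theorem PosDef.quadNorm_pos {A : Matrix n n ℝ} (hA : A.PosDef) {x : n → ℝ} (hx : x ≠ 0) :
    0 < A.quadNorm x :=
  Real.sqrt_pos.2 (hA.dotProduct_mulVec_pos hx)

theorem PosDef.exists_norm_toLp_two_le_mul_quadNorm {A : Matrix n n ℝ} (hA : A.PosDef) :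
    ∃ c > 0, ∀ x, ‖x‖₂ ≤ c * A.quadNorm x := by
  obtain ⟨c, hc, h⟩ := exists_norm_le_mul_of_homogeneous (E := EuclideanSpace ℝ n)
    (g := fun y => A.quadNorm y.ofLp) ((continuous_quadNorm A).comp (PiLp.continuous_ofLp 2 _))
    (fun y hy => hA.quadNorm_pos (by simpa using hy)) fun t y => quadNorm_smul A t y.ofLp
  exact ⟨c, hc, fun x => h (WithLp.toLp 2 x)⟩

theorem sub_mulVec_dotProduct_mulVec_add {H Q M : Matrix n n ℝ} (hH : H.IsHermitian)
    (hHM : H * M = Q) (r e : n → ℝ) :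
    (r - M *ᵥ e) ⬝ᵥ H *ᵥ (r - M *ᵥ e) + e ⬝ᵥ (Qᵀ + Q - Mᵀ * H * M) *ᵥ e =
      r ⬝ᵥ H *ᵥ r - 2 * ((r - e) ⬝ᵥ Q *ᵥ e) := by
  have hHt : Hᵀ = H := by simpa using hH.eq
  have hHr : r ⬝ᵥ H *ᵥ (M *ᵥ e) = r ⬝ᵥ Q *ᵥ e := by rw [mulVec_mulVec, hHM]
  have hswap : (M *ᵥ e) ⬝ᵥ H *ᵥ r = r ⬝ᵥ Q *ᵥ e := by
    rw [← hHr, dotProduct_mulVec, ← mulVec_transpose, hHt]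
    exact dotProduct_comm _ _
  have hQt : e ⬝ᵥ Qᵀ *ᵥ e = e ⬝ᵥ Q *ᵥ e := by
    rw [mulVec_transpose, dotProduct_comm, ← dotProduct_mulVec]
  have hMHM : e ⬝ᵥ (Mᵀ * H * M) *ᵥ e = (M *ᵥ e) ⬝ᵥ H *ᵥ (M *ᵥ e) := by
    rw [← mulVec_mulVec, ← mulVec_mulVec, mulVec_transpose, dotProduct_comm, ← dotProduct_mulVec,
      dotProduct_comm]
  simp only [sub_dotProduct, dotProduct_sub, mulVec_sub, add_mulVec, sub_mulVec, dotProduct_add,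
    hQt, hMHM, hswap, hHr]
  ring

theorem quadNorm_sq_add_quadNorm_sq_le {H Q M : Matrix n n ℝ} (hH : H.PosSemidef)
    (hD : (Qᵀ + Q - Mᵀ * H * M).PosSemidef) (hHM : H * M = Q) {α β : ℝ}
    (hα : ∀ x, ‖x‖₂ ≤ α * H.quadNorm x) (hβ : ∀ x, ‖x‖₂ ≤ β * (Qᵀ + Q - Mᵀ * H * M).quadNorm x)
    {x xhat v ζ : n → ℝ} (hmon : 0 ≤ (xhat - ζ) ⬝ᵥ (Q *ᵥ (x - xhat) + v)) :
    H.quadNorm (x - M *ᵥ (x - xhat) - ζ) ^ 2 + (Qᵀ + Q - Mᵀ * H * M).quadNorm (x - xhat) ^ 2 ≤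
      H.quadNorm (x - ζ) ^ 2 +
        2 * (α * H.quadNorm (x - ζ) + β * (Qᵀ + Q - Mᵀ * H * M).quadNorm (x - xhat)) * ‖v‖₂ := by
  have hcs : (xhat - ζ) ⬝ᵥ v ≤
      (α * H.quadNorm (x - ζ) + β * (Qᵀ + Q - Mᵀ * H * M).quadNorm (x - xhat)) * ‖v‖₂ := by
    refine (dotProduct_le_norm_toLp_two_mul _ _).trans
      (mul_le_mul_of_nonneg_right ?_ (norm_nonneg _))
    calc ‖xhat - ζ‖₂
        = ‖(WithLp.toLp 2 (x - ζ) : EuclideanSpace ℝ n) - WithLp.toLp 2 (x - xhat)‖ := by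
          rw [← WithLp.toLp_sub, sub_sub_sub_cancel_left]
      _ ≤ ‖x - ζ‖₂ + ‖x - xhat‖₂ := norm_sub_le _ _
      _ ≤ _ := add_le_add (hα _) (hβ _)
  have hid := sub_mulVec_dotProduct_mulVec_add hH.isHermitian hHM (x - ζ) (x - xhat)
  rw [sub_sub_sub_cancel_left] at hid
  rw [sub_right_comm, hH.quadNorm_sq, hH.quadNorm_sq, hD.quadNorm_sq, hid]
  rw [dotProduct_add] at hmon
  linarith

end Matrix

theorem zero_mem_of_isClosed_graph {ι n : Type*} [Fintype n] {l : Filter ι} [l.NeBot]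
    {Φ : (n → ℝ) → Set (n → ℝ)} (hgraph : IsClosed {up : (n → ℝ) × (n → ℝ) | up.2 ∈ Φ up.1})
    {Q : Matrix n n ℝ} {ξ ξhat V : ι → n → ℝ} (hincl : ∀ i, Q *ᵥ (ξ i - ξhat i) + V i ∈ Φ (ξhat i))
    (he : Tendsto (fun i => ξ i - ξhat i) l (𝓝 0)) (hV : Tendsto V l (𝓝 0)) {z : n → ℝ}
    (hz : Tendsto ξ l (𝓝 z)) : 0 ∈ Φ z := by
  have hhat : Tendsto ξhat l (𝓝 z) := by simpa using hz.sub he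
  have hp : Tendsto (fun i => Q *ᵥ (ξ i - ξhat i) + V i) l (𝓝 0) := by
    simpa using ((Q.mulVecLin.continuous_of_finiteDimensional.tendsto 0).comp he).add hV
  exact hgraph.mem_of_tendsto (hhat.prodMk_nhds hp) (Eventually.of_forall hincl)

/-- Convergence of the inexact prediction–correction proximal point sequence
to a zero of the maximal (closed-graph) monotone operator `Φ`. -/
theorem stmt8 {N : ℕ} (Φ : (Fin N → ℝ) → Set (Fin N → ℝ))
    (hmono : ∀ u v p q, p ∈ Φ u → q ∈ Φ v → 0 ≤ (u - v) ⬝ᵥ (p - q))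
    (hgraph : IsClosed {up : (Fin N → ℝ) × (Fin N → ℝ) | up.2 ∈ Φ up.1})
    (hzero : ∃ ξstar, (0 : Fin N → ℝ) ∈ Φ ξstar)
    (Q M : Matrix (Fin N) (Fin N) ℝ) (hM : IsUnit M.det)
    (hH : (Q * M⁻¹).PosDef)
    (hD : (Qᵀ + Q - Mᵀ * (Q * M⁻¹) * M).PosDef)
    (ξ ξhat V : ℕ → Fin N → ℝ)
    (hincl : ∀ k, Q.mulVec (ξ k - ξhat k) + V k ∈ Φ (ξhat k))
    (hiter : ∀ k, ξ (k + 1) = ξ k - M.mulVec (ξ k - ξhat k))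
    (hsum : Summable (fun k => Real.sqrt (V k ⬝ᵥ V k))) :
    ∃ ξinf : Fin N → ℝ, (0 : Fin N → ℝ) ∈ Φ ξinf ∧
      Filter.Tendsto ξ Filter.atTop (nhds ξinf) := by
  set H := Q * M⁻¹
  set D := Qᵀ + Q - Mᵀ * H * M
  have hHM : H * M = Q := by rw [Matrix.mul_assoc, nonsing_inv_mul M hM, Matrix.mul_one]
  obtain ⟨α, hα0, hα⟩ := hH.exists_norm_toLp_two_le_mul_quadNorm
  obtain ⟨β, hβ0, hβ⟩ := hD.exists_norm_toLp_two_le_mul_quadNorm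
  have hε : Summable fun k => ‖V k‖₂ := by simpa only [norm_toLp_two_eq_sqrt_dotProduct] using hsum
  have hfejer : ∀ ζ, 0 ∈ Φ ζ → ∀ k, H.quadNorm (ξ (k + 1) - ζ) ^ 2 + D.quadNorm (ξ k - ξhat k) ^ 2
      ≤ H.quadNorm (ξ k - ζ) ^ 2 +
        2 * (α * H.quadNorm (ξ k - ζ) + β * D.quadNorm (ξ k - ξhat k)) * ‖V k‖₂ := by
    intro ζ hζ k
    rw [hiter k]
    exact quadNorm_sq_add_quadNorm_sq_le hH.posSemidef hD.posSemidef hHM hα hβ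
      (by simpa using hmono _ _ _ _ (hincl k) hζ)
  have hconv : ∀ ζ ∈ {ζ | 0 ∈ Φ ζ}, ∃ L, Tendsto (fun k => H.quadNorm (ξ k - ζ)) atTop (𝓝 L) :=
    fun ζ hζ => exists_tendsto_of_sq_add_sq_le (fun k => quadNorm_nonneg _ _)
      (fun k => norm_nonneg _) hε hα0.le hβ0.le (hfejer ζ hζ)
  obtain ⟨ζ₀, hζ₀⟩ := hzero
  obtain ⟨L, hL⟩ := hconv ζ₀ hζ₀
  have hd := tendsto_zero_of_sq_add_sq_le hL hε.tendsto_atTop_zero (fun k => quadNorm_nonneg _ _)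
    (fun k => norm_nonneg _) hβ0.le (hfejer ζ₀ hζ₀)
  have he : Tendsto (fun k => ξ k - ξhat k) atTop (𝓝 0) :=
    squeeze_zero_norm (fun k => (norm_le_norm_toLp_two _).trans (hβ _))
      (by simpa using hd.const_mul β)
  have hV : Tendsto V atTop (𝓝 0) :=
    squeeze_zero_norm (fun k => norm_le_norm_toLp_two _) hε.tendsto_atTop_zero
  exact exists_mem_tendsto_of_opial (continuous_quadNorm H) (quadNorm_zero H)
    (fun x => (norm_le_norm_toLp_two x).trans (hα x)) ⟨ζ₀, hζ₀⟩ hconv fun z φ hφ hz =>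
      zero_mem_of_isClosed_graph hgraph (fun j => hincl (φ j)) (he.comp hφ.tendsto_atTop)
        (hV.comp hφ.tendsto_atTop) hz
end

section
/- Let Φ : ℝ^N → Set(ℝ^N) be a monotone set-valued map, let Q, M be real N×N matrices with M invertible such that H := Q M⁻¹ is symmetric positive definite, and set D := Qᵀ + Q − Mᵀ H M. Suppose ξ, ξ̂, V and ξ', ξ̂', V' in ℝ^N satisfy Q(ξ − ξ̂) + V ∈ Φ(ξ̂), Q(ξ' − ξ̂') + V' ∈ Φ(ξ̂'), and ξ' = ξ − M(ξ − ξ̂). Then ‖M(ξ' − ξ̂')‖²_H + ((ξ − ξ̂) − (ξ' − ξ̂'))ᵀ D ((ξ − ξ̂) − (ξ' − ξ̂')) ≤ ‖M(ξ − ξ̂)‖²_H + 2⟨ξ̂ − ξ̂', V − V'⟩. -/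
open Matrix

/-- Monotonicity of the successive residuals: for two consecutive inexact
prediction–correction steps, with `H = Q M⁻¹` symmetric positive definite and
`D = Qᵀ + Q − Mᵀ H M`, one has
`‖M(ξ' − ξ̂')‖²_H + ‖(ξ − ξ̂) − (ξ' − ξ̂')‖²_D ≤ ‖M(ξ − ξ̂)‖²_H + 2⟨ξ̂ − ξ̂', V − V'⟩`. -/
theorem stmt9 {N : ℕ} (Φ : (Fin N → ℝ) → Set (Fin N → ℝ))
    (hmono : ∀ u v p q, p ∈ Φ u → q ∈ Φ v → 0 ≤ (u - v) ⬝ᵥ (p - q))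
    (Q M : Matrix (Fin N) (Fin N) ℝ) (hM : IsUnit M.det)
    (hH : (Q * M⁻¹).PosDef)
    (ξ ξhat V ξ' ξhat' V' : Fin N → ℝ)
    (hincl : Q.mulVec (ξ - ξhat) + V ∈ Φ ξhat)
    (hincl' : Q.mulVec (ξ' - ξhat') + V' ∈ Φ ξhat')
    (hiter : ξ' = ξ - M.mulVec (ξ - ξhat)) :
    M.mulVec (ξ' - ξhat') ⬝ᵥ (Q * M⁻¹).mulVec (M.mulVec (ξ' - ξhat')) +
      ((ξ - ξhat) - (ξ' - ξhat')) ⬝ᵥ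
        (Qᵀ + Q - Mᵀ * (Q * M⁻¹) * M).mulVec ((ξ - ξhat) - (ξ' - ξhat')) ≤
    M.mulVec (ξ - ξhat) ⬝ᵥ (Q * M⁻¹).mulVec (M.mulVec (ξ - ξhat)) +
      2 * ((ξhat - ξhat') ⬝ᵥ (V - V')) := by
  have hsym : (Q * M⁻¹)ᵀ = Q * M⁻¹ := by
    have := hH.1
    rwa [Matrix.IsHermitian, Matrix.conjTranspose_eq_transpose_of_trivial] at this
  have hQeq : (Q * M⁻¹) * M = Q := by
    rw [Matrix.mul_assoc, Matrix.nonsing_inv_mul M hM, Matrix.mul_one]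
  set a := ξ - ξhat with ha
  set b := ξ' - ξhat' with hb
  set A := Mᵀ * (Q * M⁻¹) * M with hA
  set d := a - b with hdd
  have tr : ∀ x y : Fin N → ℝ, x ⬝ᵥ A.mulVec y = (M.mulVec x) ⬝ᵥ (Q * M⁻¹).mulVec (M.mulVec y) := by
    intro x y
    rw [hA, ← Matrix.mulVec_mulVec, ← Matrix.mulVec_mulVec, Matrix.dotProduct_mulVec x,
      ← Matrix.mulVec_transpose, Matrix.transpose_transpose]
  have hAsym : ∀ x y : Fin N → ℝ, x ⬝ᵥ A.mulVec y = y ⬝ᵥ A.mulVec x := by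
    intro x y
    have hAT : Aᵀ = A := by
      rw [hA, Matrix.transpose_mul, Matrix.transpose_mul, hsym, Matrix.transpose_transpose]
      simp [Matrix.mul_assoc]
    rw [Matrix.dotProduct_mulVec, ← Matrix.mulVec_transpose, hAT, dotProduct_comm]
  have hQtr : ∀ x y : Fin N → ℝ, x ⬝ᵥ Qᵀ.mulVec y = y ⬝ᵥ Q.mulVec x := by
    intro x y
    rw [Matrix.dotProduct_mulVec, ← Matrix.mulVec_transpose, Matrix.transpose_transpose,
      dotProduct_comm]
  have hQA : ∀ x y : Fin N → ℝ, M.mulVec x ⬝ᵥ Q.mulVec y = x ⬝ᵥ A.mulVec y := by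
    intro x y
    rw [tr, Matrix.mulVec_mulVec, hQeq]
  have hd : ξhat - ξhat' = M.mulVec a - d := by
    rw [hdd, hb, hiter, ha]; abel
  have h0 : 0 ≤ (ξhat - ξhat') ⬝ᵥ ((Q.mulVec a + V) - (Q.mulVec b + V')) :=
    hmono _ _ _ _ hincl hincl'
  have hQd : Q.mulVec d = Q.mulVec a - Q.mulVec b := by
    rw [hdd, Matrix.mulVec_sub]
  have hb2 : b = a - d := by rw [hdd]; abel
  clear_value a b d A
  have e : (Q.mulVec a + V) - (Q.mulVec b + V') = Q.mulVec d + (V - V') := by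
    rw [hQd]; abel
  rw [e, dotProduct_add, hd] at h0
  rw [hd, ← tr, ← tr]
  have expand : d ⬝ᵥ (Qᵀ + Q - A).mulVec d
      = 2 * (d ⬝ᵥ Q.mulVec d) - d ⬝ᵥ A.mulVec d := by
    rw [Matrix.sub_mulVec, Matrix.add_mulVec, dotProduct_sub, dotProduct_add,
      hQtr]
    ring
  have hbb : b ⬝ᵥ A.mulVec b = a ⬝ᵥ A.mulVec a - 2 * (a ⬝ᵥ A.mulVec d)
      + d ⬝ᵥ A.mulVec d := by
    rw [hb2, Matrix.mulVec_sub, dotProduct_sub, sub_dotProduct,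
      sub_dotProduct, hAsym d a]
    ring
  have hcross : (M.mulVec a - d) ⬝ᵥ Q.mulVec d
      = a ⬝ᵥ A.mulVec d - d ⬝ᵥ Q.mulVec d := by
    rw [sub_dotProduct, hQA]
  linarith [h0, expand, hbb, hcross]
end

section
/- Let Φ : ℝ^N → Set(ℝ^N) be a monotone set-valued map with Φ⁻¹(0) nonempty, let Q, M be real N×N matrices with M invertible such that H := Q M⁻¹ is symmetric positive definite and D := Qᵀ + Q − Mᵀ H M is symmetric positive definite. Let sequences (ξ^k), (ξ̂^k), (V^k) in ℝ^N satisfy, for every k ≥ 0, Q(ξ^k − ξ̂^k) + V^k ∈ Φ(ξ̂^k) and ξ^{k+1} = ξ^k − M(ξ^k − ξ̂^k), and suppose there are constants C ≥ 0 and τ ∈ (0,1) with ‖V^k‖ ≤ C τ^k for all k. Then k · dist(0, Φ(ξ̂^k))² → 0 as k → ∞, where dist(0, Φ(ξ̂^k)) = inf{‖p‖ : p ∈ Φ(ξ̂^k)}. -/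
open Matrix

noncomputable def euclidNorm {N : ℕ} (x : Fin N → ℝ) : ℝ := Real.sqrt (x ⬝ᵥ x)

/-!
Write `H = Q M⁻¹` and `D = Qᵀ + Q - Mᵀ H M`. For a correction step `x ↦ x - M d` one has the
identity `‖x - M d‖²_H + ‖d‖²_D = ‖x‖²_H - 2 ⟨x - d, Q d⟩`, and monotonicity of `Φ` bounds the
last term by the error `V`. Applied with `x = ξᵏ - ξ*` (`ξ*` a zero of `Φ`) it makes `‖ξᵏ - ξ*‖_H`
quasi-Fejér monotone, hence bounded, and `‖ξᵏ - ξ̂ᵏ‖²` summable. Applied with `x = M (ξᵏ - ξ̂ᵏ)`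
and monotonicity between `ξ̂ᵏ` and `ξ̂ᵏ⁺¹` it shows that `‖M (ξᵏ - ξ̂ᵏ)‖²_H` is nonincreasing up to
a geometric term; a summable sequence that is nonincreasing up to a geometric term is `o(1/k)`.
Finally `Q (ξᵏ - ξ̂ᵏ) + Vᵏ ∈ Φ (ξ̂ᵏ)` bounds `dist (0, Φ (ξ̂ᵏ))`.
-/

open Filter Topology

theorem Antitone.tendsto_nat_mul_of_summable {a : ℕ → ℝ} (ha : Antitone a) (hs : Summable a) :
    Tendsto (fun n : ℕ => (n : ℝ) * a n) atTop (𝓝 0) := by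
  have h0 : ∀ n, 0 ≤ a n := ha.le_of_tendsto hs.tendsto_atTop_zero
  -- each of the `n - n / 2` terms `a (n / 2), …, a (n - 1)` dominates `a n`
  have hle : ∀ n : ℕ, (n : ℝ) * a n ≤ 2 * ∑' k, a (k + n / 2) := by
    intro n
    have hcard : (n : ℝ) ≤ 2 * (n - n / 2 : ℕ) := by
      exact_mod_cast (by omega : n ≤ 2 * (n - n / 2))
    calc (n : ℝ) * a n ≤ 2 * ((n - n / 2 : ℕ) * a n) := by nlinarith [h0 n]
      _ ≤ 2 * ∑ k ∈ Finset.range (n - n / 2), a (k + n / 2) := by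
          gcongr
          simpa using Finset.card_nsmul_le_sum (Finset.range (n - n / 2)) (fun k => a (k + n / 2))
            (a n) fun k hk => ha (by have := Finset.mem_range.1 hk; omega)
      _ ≤ 2 * ∑' k, a (k + n / 2) := by
          gcongr
          exact ((summable_nat_add_iff _).2 hs).sum_le_tsum _ fun k _ => h0 _
  have hhalf : Tendsto (fun n : ℕ => n / 2) atTop atTop := Nat.tendsto_div_const_atTop two_ne_zero
  refine squeeze_zero (fun n => mul_nonneg n.cast_nonneg (h0 n)) hle ?_
  simpa using ((tendsto_sum_nat_add a).comp hhalf).const_mul 2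

theorem tendsto_nat_mul_of_summable_of_le_add_geometric {b : ℕ → ℝ} {c τ : ℝ} (hτ0 : 0 ≤ τ)
    (hτ1 : τ < 1) (hb : Summable b) (hstep : ∀ k, b (k + 1) ≤ b k + c * τ ^ k) :
    Tendsto (fun k : ℕ => (k : ℝ) * b k) atTop (𝓝 0) := by
  -- adding the geometric tail `c τᵏ / (1 - τ)` makes `b` antitone
  set g : ℕ → ℝ := fun k => c / (1 - τ) * τ ^ k
  have hanti : Antitone (b + g) := antitone_nat_of_succ_le fun k => by
    have : g (k + 1) = g k - c * τ ^ k := by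
      simp only [g]
      field_simp [(sub_pos.2 hτ1).ne']
      ring
    simp only [Pi.add_apply, this]
    linarith [hstep k]
  have hg : Tendsto (fun k : ℕ => (k : ℝ) * g k) atTop (𝓝 0) := by
    simpa [g, mul_left_comm] using
      (tendsto_self_mul_const_pow_of_lt_one hτ0 hτ1).const_mul (c / (1 - τ))
  have hbg := hanti.tendsto_nat_mul_of_summable
    (hb.add ((summable_geometric_of_lt_one hτ0 hτ1).mul_left _))
  simpa [mul_add] using hbg.sub hg

theorem sqrt_le_add_tsum_of_le_sq {a ε : ℕ → ℝ} (hε : ∀ k, 0 ≤ ε k) (hεs : Summable ε)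
    (hstep : ∀ k, a (k + 1) ≤ (√(a k) + ε k) ^ 2) (k : ℕ) : √(a k) ≤ √(a 0) + ∑' i, ε i := by
  have hpartial : √(a k) ≤ √(a 0) + ∑ i ∈ Finset.range k, ε i := by
    induction k with
    | zero => simp
    | succ k ih =>
      have : √(a (k + 1)) ≤ √(a k) + ε k := by
        simpa [Real.sqrt_sq (add_nonneg (Real.sqrt_nonneg _) (hε k))] using
          Real.sqrt_le_sqrt (hstep k)
      rw [Finset.sum_range_succ]
      linarith
  linarith [hεs.sum_le_tsum (Finset.range k) fun i _ => hε i]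

theorem summable_of_le_sub_add {y a δ : ℕ → ℝ} (hy : ∀ k, 0 ≤ y k) (ha : ∀ k, 0 ≤ a k)
    (hδ : ∀ k, 0 ≤ δ k) (hδs : Summable δ) (h : ∀ k, y k ≤ a k - a (k + 1) + δ k) :
    Summable y := by
  refine summable_of_sum_range_le hy (c := a 0 + ∑' k, δ k) fun n => ?_
  calc ∑ k ∈ Finset.range n, y k ≤ ∑ k ∈ Finset.range n, (a k - a (k + 1) + δ k) :=
        Finset.sum_le_sum fun k _ => h k
    _ = a 0 - a n + ∑ k ∈ Finset.range n, δ k := by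
        rw [Finset.sum_add_distrib, Finset.sum_range_sub']
    _ ≤ a 0 + ∑' k, δ k := by linarith [ha n, hδs.sum_le_tsum (Finset.range n) fun k _ => hδ k]

theorem summable_sq_of_le_add_mul_sqrt {a x ε : ℕ → ℝ} {α β γ : ℝ} (hα : 0 < α) (hβ : 0 ≤ β)
    (ha : ∀ k, 0 ≤ a k) (hε : ∀ k, 0 ≤ ε k) (hεs : Summable ε)
    (hstep : ∀ k, a (k + 1) + α * x k ^ 2 ≤ a k + (β * √(a k) + γ * x k) * ε k) :
    Summable fun k => x k ^ 2 := by
  set t := γ ^ 2 / (2 * α)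
  have hyoung : ∀ k, γ * x k * ε k ≤ α / 2 * x k ^ 2 + t * ε k ^ 2 := fun k => by
    have : α / 2 * x k ^ 2 + t * ε k ^ 2 - γ * x k * ε k = (α * x k - γ * ε k) ^ 2 / (2 * α) := by
      simp only [t]
      field_simp
      ring
    linarith [div_nonneg (sq_nonneg (α * x k - γ * ε k)) (by positivity : (0 : ℝ) ≤ 2 * α)]
  have hstep' : ∀ k, a (k + 1) + α / 2 * x k ^ 2 ≤ a k + β * √(a k) * ε k + t * ε k ^ 2 :=
    fun k => by nlinarith [hstep k, hyoung k]
  set c := β / 2 + √t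
  have hbound : ∀ k, √(a k) ≤ √(a 0) + ∑' i, c * ε i := by
    refine sqrt_le_add_tsum_of_le_sq (fun k => mul_nonneg (by positivity) (hε k))
      (hεs.mul_left c) fun k => ?_
    have hexpand : (√(a k) + c * ε k) ^ 2 = √(a k) ^ 2 + β * √(a k) * ε k + √t ^ 2 * ε k ^ 2
        + (2 * √t * √(a k) * ε k + (β ^ 2 / 4 + β * √t) * ε k ^ 2) := by ring
    rw [hexpand, Real.sq_sqrt (ha k), Real.sq_sqrt (by positivity)]
    have : 0 ≤ 2 * √t * √(a k) * ε k + (β ^ 2 / 4 + β * √t) * ε k ^ 2 := by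
      have := hε k
      positivity
    nlinarith [hstep' k, sq_nonneg (x k)]
  set S := √(a 0) + ∑' i, c * ε i
  have hεE : ∀ k, ε k ≤ ∑' i, ε i := fun k => hεs.le_tsum k fun j _ => hε j
  have hsum : Summable fun k => α / 2 * x k ^ 2 := by
    refine summable_of_le_sub_add (fun k => by positivity) ha
      (fun k => mul_nonneg ?_ (hε k)) (hεs.mul_left (β * S + t * ∑' i, ε i)) fun k => ?_
    · have : 0 ≤ S := (Real.sqrt_nonneg _).trans (hbound 0)
      have : 0 ≤ ∑' i, ε i := tsum_nonneg hε
      positivity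
    · have h1 : β * √(a k) * ε k ≤ β * S * ε k := by gcongr; exacts [hε k, hbound k]
      have h2 : t * ε k ^ 2 ≤ t * (∑' i, ε i) * ε k := by
        rw [sq, ← mul_assoc]
        gcongr
        exacts [hε k, hεE k]
      linarith [hstep' k]
  exact (summable_mul_left_iff (by positivity : α / 2 ≠ 0)).1 hsum

theorem sq_sInf_image_le {α : Type*} {f : α → ℝ} (hf : ∀ x, 0 ≤ f x) {s : Set α} {p : α}
    (hp : p ∈ s) : sInf (f '' s) ^ 2 ≤ f p ^ 2 := by
  have hlb : ∀ y ∈ f '' s, 0 ≤ y := by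
    rintro _ ⟨x, -, rfl⟩
    exact hf x
  have h0 : 0 ≤ sInf (f '' s) := Real.sInf_nonneg hlb
  gcongr
  exact csInf_le ⟨0, hlb⟩ (Set.mem_image_of_mem f hp)

open scoped RealInnerProductSpace in
theorem exists_pos_mul_sq_norm_le_inner_self {E : Type*} [NormedAddCommGroup E]
    [InnerProductSpace ℝ E] [FiniteDimensional ℝ E] (T : E →L[ℝ] E)
    (hT : ∀ x ≠ 0, 0 < ⟪x, T x⟫) : ∃ α > 0, ∀ x, α * ‖x‖ ^ 2 ≤ ⟪x, T x⟫ := by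
  rcases subsingleton_or_nontrivial E with hE | hE
  · exact ⟨1, one_pos, fun x => by simp [Subsingleton.elim x 0]⟩
  obtain ⟨z, hz, hmin⟩ := (isCompact_sphere (0 : E) 1).exists_isMinOn
    (NormedSpace.sphere_nonempty.2 zero_le_one)
    (continuous_id.inner (𝕜 := ℝ) T.continuous).continuousOn
  have hz0 : z ≠ 0 := ne_zero_of_mem_unit_sphere ⟨z, hz⟩
  refine ⟨⟪z, T z⟫, hT z hz0, fun x => ?_⟩
  rcases eq_or_ne x 0 with rfl | hx
  · simp
  have hxpos : 0 < ‖x‖ := norm_pos_iff.2 hx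
  have hunit : ‖x‖⁻¹ • x ∈ Metric.sphere (0 : E) 1 := by
    simp [norm_smul, hxpos.ne']
  have : ⟪z, T z⟫ ≤ ‖x‖⁻¹ * (‖x‖⁻¹ * ⟪x, T x⟫) := by
    simpa only [Set.mem_ofPred_eq, id, map_smul, real_inner_smul_left, real_inner_smul_right]
      using hmin hunit
  calc ⟪z, T z⟫ * ‖x‖ ^ 2 ≤ ‖x‖⁻¹ * (‖x‖⁻¹ * ⟪x, T x⟫) * ‖x‖ ^ 2 := by gcongr
    _ = ⟪x, T x⟫ := by field_simp

section EuclidNorm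

variable {N : ℕ}

-- `Fin N → ℝ` carries the sup norm: Euclidean estimates are transported from `EuclideanSpace`.
theorem euclidNorm_eq_norm_toLp (x : Fin N → ℝ) :
    euclidNorm x = ‖(WithLp.toLp 2 x : EuclideanSpace ℝ (Fin N))‖ := by
  simp [euclidNorm, EuclideanSpace.norm_eq, dotProduct, sq]

theorem dotProduct_eq_inner_toLp (x y : Fin N → ℝ) :
    x ⬝ᵥ y = inner ℝ (WithLp.toLp 2 x : EuclideanSpace ℝ (Fin N)) (WithLp.toLp 2 y) := by
  simp [EuclideanSpace.inner_toLp_toLp, dotProduct_comm]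

theorem euclidNorm_nonneg (x : Fin N → ℝ) : 0 ≤ euclidNorm x := Real.sqrt_nonneg _

theorem dotProduct_le_euclidNorm_mul (x y : Fin N → ℝ) : x ⬝ᵥ y ≤ euclidNorm x * euclidNorm y := by
  rw [dotProduct_eq_inner_toLp, euclidNorm_eq_norm_toLp, euclidNorm_eq_norm_toLp]
  exact real_inner_le_norm _ _

theorem euclidNorm_add_le (x y : Fin N → ℝ) : euclidNorm (x + y) ≤ euclidNorm x + euclidNorm y := by
  simpa only [euclidNorm_eq_norm_toLp, WithLp.toLp_add] using norm_add_le _ _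

theorem euclidNorm_sub_le (x y : Fin N → ℝ) : euclidNorm (x - y) ≤ euclidNorm x + euclidNorm y := by
  simpa only [euclidNorm_eq_norm_toLp, WithLp.toLp_sub] using norm_sub_le _ _

theorem euclidNorm_mulVec_le (A : Matrix (Fin N) (Fin N) ℝ) (x : Fin N → ℝ) :
    euclidNorm (A *ᵥ x) ≤ ‖toEuclideanCLM (𝕜 := ℝ) A‖ * euclidNorm x := by
  simpa only [euclidNorm_eq_norm_toLp, toEuclideanCLM_toLp] using
    (toEuclideanCLM (𝕜 := ℝ) A).le_opNorm (WithLp.toLp 2 x)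

theorem euclidNorm_le_sqrt_div_of_mul_sq_le {x : Fin N → ℝ} {α q : ℝ} (hα : 0 < α)
    (h : α * euclidNorm x ^ 2 ≤ q) : euclidNorm x ≤ √q / √α := by
  rw [← Real.sqrt_div' q hα.le]
  refine (le_abs_self _).trans (Real.abs_le_sqrt ?_)
  rw [le_div_iff₀ hα]
  linarith

theorem Matrix.PosDef.exists_pos_mul_sq_euclidNorm_le {A : Matrix (Fin N) (Fin N) ℝ}
    (hA : A.PosDef) :
    ∃ α > 0, ∀ x, α * euclidNorm x ^ 2 ≤ x ⬝ᵥ A *ᵥ x := by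
  obtain ⟨α, hα, hle⟩ := exists_pos_mul_sq_norm_le_inner_self (toEuclideanCLM (𝕜 := ℝ) A)
    fun y hy => by
      simpa [inner_toEuclideanCLM] using
        hA.dotProduct_mulVec_pos (x := WithLp.ofLp y) (by simpa using hy)
  refine ⟨α, hα, fun x => ?_⟩
  simpa only [euclidNorm_eq_norm_toLp, dotProduct_eq_inner_toLp, toEuclideanCLM_toLp] using
    hle (WithLp.toLp 2 x)

theorem dotProduct_mulVec_le_mul_sq_euclidNorm (A : Matrix (Fin N) (Fin N) ℝ) (x : Fin N → ℝ) :
    x ⬝ᵥ A *ᵥ x ≤ ‖toEuclideanCLM (𝕜 := ℝ) A‖ * euclidNorm x ^ 2 := by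
  calc x ⬝ᵥ A *ᵥ x ≤ euclidNorm x * euclidNorm (A *ᵥ x) := dotProduct_le_euclidNorm_mul _ _
    _ ≤ euclidNorm x * (‖toEuclideanCLM (𝕜 := ℝ) A‖ * euclidNorm x) := by
        gcongr
        · exact euclidNorm_nonneg x
        · exact euclidNorm_mulVec_le A x
    _ = ‖toEuclideanCLM (𝕜 := ℝ) A‖ * euclidNorm x ^ 2 := by ring

theorem sq_euclidNorm_mulVec_add_le (A : Matrix (Fin N) (Fin N) ℝ) (x y : Fin N → ℝ) :
    euclidNorm (A *ᵥ x + y) ^ 2 ≤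
      2 * ‖toEuclideanCLM (𝕜 := ℝ) A‖ ^ 2 * euclidNorm x ^ 2 + 2 * euclidNorm y ^ 2 := by
  have h := pow_le_pow_left₀ (euclidNorm_nonneg _)
    ((euclidNorm_add_le _ _).trans (add_le_add_left (euclidNorm_mulVec_le A x) (euclidNorm y))) 2
  nlinarith [sq_nonneg (‖toEuclideanCLM (𝕜 := ℝ) A‖ * euclidNorm x - euclidNorm y)]

end EuclidNorm

theorem Matrix.dotProduct_sub_mulVec_add_eq {R n : Type*} [CommRing R] [Fintype n]
    {H Q M : Matrix n n R} (hH : Hᵀ = H) (hHM : H * M = Q) (x d : n → R) :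
    (x - M *ᵥ d) ⬝ᵥ H *ᵥ (x - M *ᵥ d) + d ⬝ᵥ (Qᵀ + Q - Mᵀ * H * M) *ᵥ d =
      x ⬝ᵥ H *ᵥ x - 2 * ((x - d) ⬝ᵥ Q *ᵥ d) := by
  have hcross : (M *ᵥ d) ⬝ᵥ H *ᵥ x = x ⬝ᵥ Q *ᵥ d := by
    calc (M *ᵥ d) ⬝ᵥ H *ᵥ x = (Hᵀ *ᵥ x) ⬝ᵥ M *ᵥ d := by rw [hH, dotProduct_comm]
      _ = x ⬝ᵥ Q *ᵥ d := by rw [mulVec_transpose, ← dotProduct_mulVec, mulVec_mulVec, hHM]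
  have hQt : d ⬝ᵥ Qᵀ *ᵥ d = d ⬝ᵥ Q *ᵥ d := by
    rw [dotProduct_mulVec, vecMul_transpose, dotProduct_comm]
  have hMHM : d ⬝ᵥ (Mᵀ * H * M) *ᵥ d = (M *ᵥ d) ⬝ᵥ H *ᵥ (M *ᵥ d) := by
    rw [← mulVec_mulVec, ← mulVec_mulVec, dotProduct_mulVec d, vecMul_transpose]
  simp only [mulVec_sub, sub_mulVec, add_mulVec, dotProduct_sub, sub_dotProduct, dotProduct_add,
    hQt, hMHM]
  rw [hcross, mulVec_mulVec, hHM]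
  ring

theorem Matrix.dotProduct_sub_mulVec_add_le {n : Type*} [Fintype n] {H Q M : Matrix n n ℝ}
    (hH : Hᵀ = H) (hHM : H * M = Q) {x d r : n → ℝ} (hmono : 0 ≤ (x - d) ⬝ᵥ (Q *ᵥ d + r)) :
    (x - M *ᵥ d) ⬝ᵥ H *ᵥ (x - M *ᵥ d) + d ⬝ᵥ (Qᵀ + Q - Mᵀ * H * M) *ᵥ d ≤
      x ⬝ᵥ H *ᵥ x + 2 * ((x - d) ⬝ᵥ r) := by
  rw [dotProduct_sub_mulVec_add_eq hH hHM]
  rw [dotProduct_add] at hmono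
  linarith

theorem sq_euclidNorm_le_mul_dotProduct_mulVec {N : ℕ} {H M : Matrix (Fin N) (Fin N) ℝ}
    (hM : IsUnit M.det) {α : ℝ} (hα : 0 < α) (hH : ∀ y, α * euclidNorm y ^ 2 ≤ y ⬝ᵥ H *ᵥ y)
    (x : Fin N → ℝ) :
    euclidNorm x ^ 2 ≤
      ‖toEuclideanCLM (𝕜 := ℝ) M⁻¹‖ ^ 2 / α * ((M *ᵥ x) ⬝ᵥ H *ᵥ (M *ᵥ x)) := by
  have hx : euclidNorm x ≤ ‖toEuclideanCLM (𝕜 := ℝ) M⁻¹‖ * euclidNorm (M *ᵥ x) := by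
    simpa [mulVec_mulVec, nonsing_inv_mul M hM] using euclidNorm_mulVec_le M⁻¹ (M *ᵥ x)
  have hMx : euclidNorm (M *ᵥ x) ^ 2 ≤ (M *ᵥ x) ⬝ᵥ H *ᵥ (M *ᵥ x) / α := by
    rw [le_div_iff₀ hα]
    linarith [hH (M *ᵥ x)]
  calc euclidNorm x ^ 2 ≤ (‖toEuclideanCLM (𝕜 := ℝ) M⁻¹‖ * euclidNorm (M *ᵥ x)) ^ 2 := by
        gcongr
        exact euclidNorm_nonneg x
    _ = ‖toEuclideanCLM (𝕜 := ℝ) M⁻¹‖ ^ 2 * euclidNorm (M *ᵥ x) ^ 2 := by ring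
    _ ≤ ‖toEuclideanCLM (𝕜 := ℝ) M⁻¹‖ ^ 2 * ((M *ᵥ x) ⬝ᵥ H *ᵥ (M *ᵥ x) / α) := by gcongr
    _ = _ := by ring

section CorrectionIteration

variable {N : ℕ} {Φ : (Fin N → ℝ) → Set (Fin N → ℝ)} {H Q M : Matrix (Fin N) (Fin N) ℝ}
  {ξ ξhat V : ℕ → Fin N → ℝ}

theorem dist_step_le (hmono : ∀ u v p q, p ∈ Φ u → q ∈ Φ v → 0 ≤ (u - v) ⬝ᵥ (p - q))
    (hH : Hᵀ = H) (hHM : H * M = Q) (hincl : ∀ k, Q *ᵥ (ξ k - ξhat k) + V k ∈ Φ (ξhat k))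
    (hiter : ∀ k, ξ (k + 1) = ξ k - M *ᵥ (ξ k - ξhat k)) {ξstar : Fin N → ℝ}
    (hstar : 0 ∈ Φ ξstar) (k : ℕ) :
    (ξ (k + 1) - ξstar) ⬝ᵥ H *ᵥ (ξ (k + 1) - ξstar) +
        (ξ k - ξhat k) ⬝ᵥ (Qᵀ + Q - Mᵀ * H * M) *ᵥ (ξ k - ξhat k) ≤
      (ξ k - ξstar) ⬝ᵥ H *ᵥ (ξ k - ξstar) + 2 * ((ξhat k - ξstar) ⬝ᵥ V k) := by
  have hx : ξ k - ξstar - (ξ k - ξhat k) = ξhat k - ξstar := sub_sub_sub_cancel_left _ _ _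
  have hx' : ξ k - ξstar - M *ᵥ (ξ k - ξhat k) = ξ (k + 1) - ξstar := by
    rw [hiter, sub_right_comm]
  have h := dotProduct_sub_mulVec_add_le hH hHM (x := ξ k - ξstar) (d := ξ k - ξhat k)
    (r := V k) (by simpa only [hx, sub_zero] using hmono _ _ _ _ (hincl k) hstar)
  rwa [hx, hx'] at h

theorem hat_sub_hat_succ_eq (hiter : ∀ k, ξ (k + 1) = ξ k - M *ᵥ (ξ k - ξhat k)) (k : ℕ) :
    ξhat k - ξhat (k + 1) =
      M *ᵥ (ξ k - ξhat k) - ((ξ k - ξhat k) - (ξ (k + 1) - ξhat (k + 1))) := by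
  rw [hiter k]
  abel

theorem residual_step_le (hmono : ∀ u v p q, p ∈ Φ u → q ∈ Φ v → 0 ≤ (u - v) ⬝ᵥ (p - q))
    (hH : Hᵀ = H) (hHM : H * M = Q) (hD : (Qᵀ + Q - Mᵀ * H * M).PosSemidef)
    (hincl : ∀ k, Q *ᵥ (ξ k - ξhat k) + V k ∈ Φ (ξhat k))
    (hiter : ∀ k, ξ (k + 1) = ξ k - M *ᵥ (ξ k - ξhat k)) (k : ℕ) :
    (M *ᵥ (ξ (k + 1) - ξhat (k + 1))) ⬝ᵥ H *ᵥ (M *ᵥ (ξ (k + 1) - ξhat (k + 1))) ≤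
      (M *ᵥ (ξ k - ξhat k)) ⬝ᵥ H *ᵥ (M *ᵥ (ξ k - ξhat k)) +
        2 * ((ξhat k - ξhat (k + 1)) ⬝ᵥ (V k - V (k + 1))) := by
  set d := fun k => ξ k - ξhat k
  have hx : M *ᵥ d k - (d k - d (k + 1)) = ξhat k - ξhat (k + 1) :=
    (hat_sub_hat_succ_eq hiter k).symm
  have hx' : M *ᵥ d k - M *ᵥ (d k - d (k + 1)) = M *ᵥ d (k + 1) := by
    rw [← mulVec_sub, sub_sub_cancel]
  have hp : Q *ᵥ (d k - d (k + 1)) + (V k - V (k + 1)) =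
      (Q *ᵥ d k + V k) - (Q *ᵥ d (k + 1) + V (k + 1)) := by
    rw [mulVec_sub]
    abel
  have h := dotProduct_sub_mulVec_add_le hH hHM (x := M *ᵥ d k) (d := d k - d (k + 1))
    (r := V k - V (k + 1)) (by
      rw [hx, hp]
      exact hmono _ _ _ _ (hincl k) (hincl (k + 1)))
  rw [hx, hx'] at h
  have := hD.dotProduct_mulVec_nonneg (d k - d (k + 1))
  simp only [star_trivial] at this
  linarith

theorem residual_step_le_add_geometric
    (hmono : ∀ u v p q, p ∈ Φ u → q ∈ Φ v → 0 ≤ (u - v) ⬝ᵥ (p - q))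
    (hH : Hᵀ = H) (hHM : H * M = Q) (hD : (Qᵀ + Q - Mᵀ * H * M).PosSemidef)
    (hincl : ∀ k, Q *ᵥ (ξ k - ξhat k) + V k ∈ Φ (ξhat k))
    (hiter : ∀ k, ξ (k + 1) = ξ k - M *ᵥ (ξ k - ξhat k)) {X C τ : ℝ}
    (hX : ∀ k, euclidNorm (ξ k - ξhat k) ≤ X) (hV : ∀ k, euclidNorm (V k) ≤ C * τ ^ k) (k : ℕ) :
    (M *ᵥ (ξ (k + 1) - ξhat (k + 1))) ⬝ᵥ H *ᵥ (M *ᵥ (ξ (k + 1) - ξhat (k + 1))) ≤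
      (M *ᵥ (ξ k - ξhat k)) ⬝ᵥ H *ᵥ (M *ᵥ (ξ k - ξhat k)) +
        2 * ((‖toEuclideanCLM (𝕜 := ℝ) M‖ + 2) * X * (C * (1 + τ))) * τ ^ k := by
  have hX0 : 0 ≤ X := (euclidNorm_nonneg _).trans (hX 0)
  have hhat : euclidNorm (ξhat k - ξhat (k + 1)) ≤ (‖toEuclideanCLM (𝕜 := ℝ) M‖ + 2) * X := by
    rw [hat_sub_hat_succ_eq hiter k]
    refine ((euclidNorm_sub_le _ _).trans (add_le_add_right (euclidNorm_sub_le _ _) _)).trans ?_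
    have hMd := (euclidNorm_mulVec_le M (ξ k - ξhat k)).trans
      (mul_le_mul_of_nonneg_left (hX k) (norm_nonneg _))
    linarith [hX k, hX (k + 1)]
  have hVV : euclidNorm (V k - V (k + 1)) ≤ C * (1 + τ) * τ ^ k := by
    refine ((euclidNorm_sub_le _ _).trans (add_le_add (hV k) (hV (k + 1)))).trans_eq ?_
    ring
  have hcross := (dotProduct_le_euclidNorm_mul _ _).trans
    (mul_le_mul hhat hVV (euclidNorm_nonneg _) (by positivity))
  have hstep := residual_step_le hmono hH hHM hD hincl hiter k
  have hregroup : (‖toEuclideanCLM (𝕜 := ℝ) M‖ + 2) * X * (C * (1 + τ) * τ ^ k) =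
      (‖toEuclideanCLM (𝕜 := ℝ) M‖ + 2) * X * (C * (1 + τ)) * τ ^ k := by ring
  linarith

theorem summable_sq_euclidNorm_sub (hmono : ∀ u v p q, p ∈ Φ u → q ∈ Φ v → 0 ≤ (u - v) ⬝ᵥ (p - q))
    (hH : H.PosDef) (hD : (Qᵀ + Q - Mᵀ * H * M).PosDef) (hHM : H * M = Q)
    (hincl : ∀ k, Q *ᵥ (ξ k - ξhat k) + V k ∈ Φ (ξhat k))
    (hiter : ∀ k, ξ (k + 1) = ξ k - M *ᵥ (ξ k - ξhat k)) {ξstar : Fin N → ℝ}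
    (hstar : 0 ∈ Φ ξstar) {ε : ℕ → ℝ} (hεs : Summable ε) (hV : ∀ k, euclidNorm (V k) ≤ ε k) :
    Summable fun k => euclidNorm (ξ k - ξhat k) ^ 2 := by
  obtain ⟨αH, hαH, hHcoer⟩ := hH.exists_pos_mul_sq_euclidNorm_le
  obtain ⟨αD, hαD, hDcoer⟩ := hD.exists_pos_mul_sq_euclidNorm_le
  have hε : ∀ k, 0 ≤ ε k := fun k => (euclidNorm_nonneg _).trans (hV k)
  refine summable_sq_of_le_add_mul_sqrt (a := fun k => (ξ k - ξstar) ⬝ᵥ H *ᵥ (ξ k - ξstar))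
    (β := 2 / √αH) (γ := 2) hαD (by positivity)
    (fun k => (by positivity : 0 ≤ αH * _).trans (hHcoer _)) hε hεs fun k => ?_
  have hξ := euclidNorm_le_sqrt_div_of_mul_sq_le hαH (hHcoer (ξ k - ξstar))
  have hhat :
      euclidNorm (ξhat k - ξstar) ≤ euclidNorm (ξ k - ξstar) + euclidNorm (ξ k - ξhat k) := by
    simpa using euclidNorm_sub_le (ξ k - ξstar) (ξ k - ξhat k)
  have hcross : (ξhat k - ξstar) ⬝ᵥ V k ≤
      (√((ξ k - ξstar) ⬝ᵥ H *ᵥ (ξ k - ξstar)) / √αH + euclidNorm (ξ k - ξhat k)) * ε k :=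
    (dotProduct_le_euclidNorm_mul _ _).trans
      (mul_le_mul (by linarith) (hV k) (euclidNorm_nonneg _)
        (add_nonneg (by positivity) (euclidNorm_nonneg _)))
  have hstep := dist_step_le hmono (isHermitian_iff_isSymm.1 hH.isHermitian) hHM hincl hiter hstar k
  have hDd := hDcoer (ξ k - ξhat k)
  have hregroup : (√((ξ k - ξstar) ⬝ᵥ H *ᵥ (ξ k - ξstar)) / √αH + euclidNorm (ξ k - ξhat k)) * ε k * 2 =
      (2 / √αH * √((ξ k - ξstar) ⬝ᵥ H *ᵥ (ξ k - ξstar)) + 2 * euclidNorm (ξ k - ξhat k)) * ε k := by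
    ring
  linarith

theorem tendsto_nat_mul_sq_euclidNorm_sub
    (hmono : ∀ u v p q, p ∈ Φ u → q ∈ Φ v → 0 ≤ (u - v) ⬝ᵥ (p - q))
    (hH : H.PosDef) (hD : (Qᵀ + Q - Mᵀ * H * M).PosSemidef) (hHM : H * M = Q)
    (hM : IsUnit M.det) (hincl : ∀ k, Q *ᵥ (ξ k - ξhat k) + V k ∈ Φ (ξhat k))
    (hiter : ∀ k, ξ (k + 1) = ξ k - M *ᵥ (ξ k - ξhat k)) {C τ : ℝ} (hτ0 : 0 ≤ τ) (hτ1 : τ < 1)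
    (hV : ∀ k, euclidNorm (V k) ≤ C * τ ^ k)
    (hd : Summable fun k => euclidNorm (ξ k - ξhat k) ^ 2) :
    Tendsto (fun k : ℕ => (k : ℝ) * euclidNorm (ξ k - ξhat k) ^ 2) atTop (𝓝 0) := by
  obtain ⟨αH, hαH, hHcoer⟩ := hH.exists_pos_mul_sq_euclidNorm_le
  have hX : ∀ k, euclidNorm (ξ k - ξhat k) ≤ √(∑' j, euclidNorm (ξ j - ξhat j) ^ 2) := fun k =>
    (le_abs_self _).trans (Real.abs_le_sqrt (hd.le_tsum k fun j _ => sq_nonneg _))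
  have hb : Summable fun k => (M *ᵥ (ξ k - ξhat k)) ⬝ᵥ H *ᵥ (M *ᵥ (ξ k - ξhat k)) := by
    refine Summable.of_nonneg_of_le (fun k => (by positivity : 0 ≤ αH * _).trans (hHcoer _))
      (fun k => (dotProduct_mulVec_le_mul_sq_euclidNorm H _).trans ?_)
      (hd.mul_left (‖toEuclideanCLM (𝕜 := ℝ) H‖ * ‖toEuclideanCLM (𝕜 := ℝ) M‖ ^ 2))
    rw [mul_assoc, ← mul_pow]
    gcongr
    · exact euclidNorm_nonneg _
    · exact euclidNorm_mulVec_le M _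
  have hbk := tendsto_nat_mul_of_summable_of_le_add_geometric hτ0 hτ1 hb
    (residual_step_le_add_geometric hmono (isHermitian_iff_isSymm.1 hH.isHermitian) hHM hD
      hincl hiter hX hV)
  refine squeeze_zero (fun k => by positivity) (fun k => ?_)
    (by simpa only [mul_zero] using hbk.const_mul (‖toEuclideanCLM (𝕜 := ℝ) M⁻¹‖ ^ 2 / αH))
  rw [mul_left_comm]
  exact mul_le_mul_of_nonneg_left (sq_euclidNorm_le_mul_dotProduct_mulVec hM hαH hHcoer _)
    k.cast_nonneg

end CorrectionIteration

theorem stmt12_general {N : ℕ} (Φ : (Fin N → ℝ) → Set (Fin N → ℝ))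
    (hmono : ∀ u v p q, p ∈ Φ u → q ∈ Φ v → 0 ≤ (u - v) ⬝ᵥ (p - q))
    (hzero : ∃ ξstar, (0 : Fin N → ℝ) ∈ Φ ξstar)
    (Q M : Matrix (Fin N) (Fin N) ℝ) (hM : IsUnit M.det)
    (hH : (Q * M⁻¹).PosDef)
    (hD : (Qᵀ + Q - Mᵀ * (Q * M⁻¹) * M).PosDef)
    (ξ ξhat V : ℕ → Fin N → ℝ)
    (hincl : ∀ k, Q.mulVec (ξ k - ξhat k) + V k ∈ Φ (ξhat k))
    (hiter : ∀ k, ξ (k + 1) = ξ k - M.mulVec (ξ k - ξhat k))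
    (C τ : ℝ) (hτ : τ ∈ Set.Ioo (0 : ℝ) 1)
    (hV : ∀ k, Real.sqrt (V k ⬝ᵥ V k) ≤ C * τ ^ k) :
    Filter.Tendsto
      (fun k : ℕ => (k : ℝ) * (sInf (euclidNorm '' Φ (ξhat k))) ^ 2)
      Filter.atTop (nhds 0) := by
  obtain ⟨ξstar, hstar⟩ := hzero
  obtain ⟨hτ0, hτ1⟩ := hτ
  have hHM : Q * M⁻¹ * M = Q := by rw [Matrix.mul_assoc, nonsing_inv_mul M hM, Matrix.mul_one]
  have hd := summable_sq_euclidNorm_sub hmono hH hD hHM hincl hiter hstar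
    ((summable_geometric_of_lt_one hτ0.le hτ1).mul_left C) hV
  have hdk := tendsto_nat_mul_sq_euclidNorm_sub hmono hH hD.posSemidef hHM hM hincl hiter
    hτ0.le hτ1 hV hd
  have hgeom := tendsto_self_mul_const_pow_of_lt_one (sq_nonneg τ) (by nlinarith : τ ^ 2 < 1)
  set K := ‖toEuclideanCLM (𝕜 := ℝ) Q‖
  refine squeeze_zero (fun k => by positivity) (fun k => ?_)
    (by simpa using (hdk.const_mul (2 * K ^ 2)).add (hgeom.const_mul (2 * C ^ 2)))
  have hVk : euclidNorm (V k) ^ 2 ≤ C ^ 2 * (τ ^ 2) ^ k := by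
    rw [← pow_mul, mul_comm 2 k, pow_mul, ← mul_pow]
    exact pow_le_pow_left₀ (euclidNorm_nonneg _) (hV k) 2
  calc (k : ℝ) * sInf (euclidNorm '' Φ (ξhat k)) ^ 2
      ≤ k * euclidNorm (Q *ᵥ (ξ k - ξhat k) + V k) ^ 2 := by
        exact mul_le_mul_of_nonneg_left (sq_sInf_image_le euclidNorm_nonneg (hincl k))
          k.cast_nonneg
    _ ≤ k * (2 * K ^ 2 * euclidNorm (ξ k - ξhat k) ^ 2 + 2 * (C ^ 2 * (τ ^ 2) ^ k)) := by
        gcongr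
        exact (sq_euclidNorm_mulVec_add_le Q _ _).trans (by gcongr)
    _ = 2 * K ^ 2 * (k * euclidNorm (ξ k - ξhat k) ^ 2) + 2 * C ^ 2 * (k * (τ ^ 2) ^ k) := by
        ring

/-- With geometrically decaying errors `‖V^k‖ ≤ C τ^k`, the first-order
optimality residual satisfies `k · dist(0, Φ(ξ̂^k))² → 0`, where
`dist(0, S) = inf {‖p‖ : p ∈ S}` in the Euclidean norm. -/
theorem stmt12 {N : ℕ} (Φ : (Fin N → ℝ) → Set (Fin N → ℝ))
    (hmono : ∀ u v p q, p ∈ Φ u → q ∈ Φ v → 0 ≤ (u - v) ⬝ᵥ (p - q))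
    (hzero : ∃ ξstar, (0 : Fin N → ℝ) ∈ Φ ξstar)
    (Q M : Matrix (Fin N) (Fin N) ℝ) (hM : IsUnit M.det)
    (hH : (Q * M⁻¹).PosDef)
    (hD : (Qᵀ + Q - Mᵀ * (Q * M⁻¹) * M).PosDef)
    (ξ ξhat V : ℕ → Fin N → ℝ)
    (hincl : ∀ k, Q.mulVec (ξ k - ξhat k) + V k ∈ Φ (ξhat k))
    (hiter : ∀ k, ξ (k + 1) = ξ k - M.mulVec (ξ k - ξhat k))
    (C τ : ℝ) (hC : 0 ≤ C) (hτ : τ ∈ Set.Ioo (0 : ℝ) 1)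
    (hV : ∀ k, Real.sqrt (V k ⬝ᵥ V k) ≤ C * τ ^ k) :
    Filter.Tendsto
      (fun k : ℕ => (k : ℝ) * (sInf (euclidNorm '' Φ (ξhat k))) ^ 2)
      Filter.atTop (nhds 0) :=
  stmt12_general Φ hmono hzero Q M hM hH hD ξ ξhat V hincl hiter C τ hτ hV
end

section
/- Let Φ : ℝ^N → Set(ℝ^N) be a monotone set-valued map and let S be a real N×N symmetric positive definite matrix. Suppose u, v, a, b ∈ ℝ^N and p ∈ Φ(u), q ∈ Φ(v) satisfy S u + p = a and S v + q = b. Then ‖u − v‖_S ≤ ‖a − b‖_{S⁻¹}, i.e., the variable-metric resolvent (S + Φ)⁻¹ is nonexpansive from the ‖·‖_{S⁻¹}-norm to the ‖·‖_S-norm. -/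
/-!
Write `w = u - v` and `d = a - b`, so `d = S w + (p - q)`. Monotonicity gives
`‖w‖_S² ≤ ⟨w, d⟩`, and expanding `0 ≤ ‖w - S⁻¹ d‖_S²` gives the Fenchel–Young inequality
`2 ⟨w, d⟩ ≤ ‖w‖_S² + ‖d‖_{S⁻¹}²`. Together they yield `‖w‖_S² ≤ ‖d‖_{S⁻¹}²`.
-/

open Matrix

namespace Matrix.PosDef

variable {n : Type*} [Fintype n] [DecidableEq n] {S : Matrix n n ℝ}

theorem mulVec_inv_mulVec (hS : S.PosDef) (d : n → ℝ) : S *ᵥ (S⁻¹ *ᵥ d) = d := by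
  rw [mulVec_mulVec, mul_nonsing_inv S (isUnit_iff_isUnit_det S |>.mp hS.isUnit), one_mulVec]

theorem two_mul_dotProduct_le_add_inv (hS : S.PosDef) (w d : n → ℝ) :
    2 * (w ⬝ᵥ d) ≤ w ⬝ᵥ S *ᵥ w + d ⬝ᵥ S⁻¹ *ᵥ d := by
  have hcross : (S⁻¹ *ᵥ d) ⬝ᵥ S *ᵥ w = d ⬝ᵥ w := by
    rw [dotProduct_mulVec, ← mulVec_transpose, (isHermitian_iff_isSymm.mp hS.isHermitian).eq,
      hS.mulVec_inv_mulVec]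
  have hsq := hS.posSemidef.dotProduct_mulVec_nonneg (w - S⁻¹ *ᵥ d)
  simp only [star_trivial, mulVec_sub, hS.mulVec_inv_mulVec, sub_dotProduct, dotProduct_sub,
    hcross] at hsq
  rw [dotProduct_comm d w, dotProduct_comm (S⁻¹ *ᵥ d) d] at hsq
  linarith

theorem dotProduct_mulVec_le_inv_of_le (hS : S.PosDef) {w d : n → ℝ}
    (h : w ⬝ᵥ S *ᵥ w ≤ w ⬝ᵥ d) : w ⬝ᵥ S *ᵥ w ≤ d ⬝ᵥ S⁻¹ *ᵥ d := by
  linarith [hS.two_mul_dotProduct_le_add_inv w d]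

end Matrix.PosDef

/-- The variable-metric resolvent `(S + Φ)⁻¹` of a monotone operator `Φ`
is nonexpansive from the `‖·‖_{S⁻¹}`-norm to the `‖·‖_S`-norm:
if `S u + p = a` and `S v + q = b` with `p ∈ Φ(u)`, `q ∈ Φ(v)`, then
`‖u − v‖_S ≤ ‖a − b‖_{S⁻¹}`. -/
theorem stmt13 {N : ℕ} (Φ : (Fin N → ℝ) → Set (Fin N → ℝ))
    (hmono : ∀ u v p q, p ∈ Φ u → q ∈ Φ v → 0 ≤ (u - v) ⬝ᵥ (p - q))
    (S : Matrix (Fin N) (Fin N) ℝ) (hS : S.PosDef)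
    (u v a b p q : Fin N → ℝ)
    (hp : p ∈ Φ u) (hq : q ∈ Φ v)
    (ha : S.mulVec u + p = a) (hb : S.mulVec v + q = b) :
    Real.sqrt ((u - v) ⬝ᵥ S.mulVec (u - v)) ≤
      Real.sqrt ((a - b) ⬝ᵥ S⁻¹.mulVec (a - b)) := by
  have hdiff : a - b = S *ᵥ (u - v) + (p - q) := by
    rw [← ha, ← hb, mulVec_sub]
    abel
  have hmono_uv : (u - v) ⬝ᵥ S *ᵥ (u - v) ≤ (u - v) ⬝ᵥ (a - b) := by
    rw [hdiff, dotProduct_add]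
    linarith [hmono u v p q hp hq]
  exact Real.sqrt_le_sqrt (hS.dotProduct_mulVec_le_inv_of_le hmono_uv)
end

section
/- Let C ⊆ ℝ^n be a convex set, B : ℝ^n → ℝ^d a linear map, q ∈ ℝ^n, h : ℝ^d → ℝ a strictly convex function, and r : ℝ^n → ℝ a convex function. Define f(x) = h(Bx) + ⟨q, x⟩ + r(x). If x* and x** both minimize f over C, then B x* = B x**; that is, the linear image Bx is invariant over the set of minimizers of f on C. -/
open Matrix

/-- If `f(x) = h(Bx) + ⟨q, x⟩ + r(x)` with `h` strictly convex, `r` convex,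
and `C` convex, then the linear image `Bx` is invariant over the set of minimizers of `f`
on `C`. -/
theorem stmt15 {n d : ℕ} (C : Set (Fin n → ℝ)) (hC : Convex ℝ C)
    (B : (Fin n → ℝ) →ₗ[ℝ] (Fin d → ℝ)) (q : Fin n → ℝ)
    (h : (Fin d → ℝ) → ℝ) (hh : StrictConvexOn ℝ Set.univ h)
    (r : (Fin n → ℝ) → ℝ) (hr : ConvexOn ℝ Set.univ r)
    (f : (Fin n → ℝ) → ℝ) (hf : ∀ x, f x = h (B x) + q ⬝ᵥ x + r x)
    (x₁ x₂ : Fin n → ℝ)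
    (hx₁ : x₁ ∈ C ∧ ∀ y ∈ C, f x₁ ≤ f y)
    (hx₂ : x₂ ∈ C ∧ ∀ y ∈ C, f x₂ ≤ f y) :
    B x₁ = B x₂ := by
  by_contra hne
  set m := (1/2 : ℝ) • x₁ + (1/2 : ℝ) • x₂ with hm
  have hmC : m ∈ C := hC hx₁.1 hx₂.1 (by norm_num) (by norm_num) (by norm_num)
  have hBm : B m = (1/2 : ℝ) • B x₁ + (1/2 : ℝ) • B x₂ := by
    simp [hm, map_add, _root_.map_smul]
  have hhm : h (B m) < (1/2 : ℝ) * h (B x₁) + (1/2 : ℝ) * h (B x₂) := by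
    rw [hBm]
    exact hh.2 (Set.mem_univ _) (Set.mem_univ _) hne (by norm_num) (by norm_num)
      (by norm_num)
  have hrm : r m ≤ (1/2 : ℝ) * r x₁ + (1/2 : ℝ) * r x₂ :=
    hr.2 (Set.mem_univ _) (Set.mem_univ _) (by norm_num) (by norm_num) (by norm_num)
  have hqm : q ⬝ᵥ m = (1/2 : ℝ) * (q ⬝ᵥ x₁) + (1/2 : ℝ) * (q ⬝ᵥ x₂) := by
    simp [hm, dotProduct_add, dotProduct_smul, smul_eq_mul]
  have hfm : f m < (1/2 : ℝ) * f x₁ + (1/2 : ℝ) * f x₂ := by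
    rw [hf, hf, hf, hqm]
    linarith
  have h1 := hx₁.2 m hmC
  have h2 := hx₂.2 m hmC
  linarith
end
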